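/- arXiv:1112.3981 — 7 statements merged into one kernel-verified Lean document; each statement's English description precedes it below -/
import Mathlib

section
/- Let N be a complete normal subgroup of an n-space group Γ, let V = Span(N), and let K be the kernel of the action of Γ on V. Suppose b+B ∈ Γ, write b = c+d with c ∈ V and d ∈ V^⊥, and suppose that for every v ∈ V there exists a+A ∈ N with a + Av = c + Bv. Then b+B ∈ NK. Consequently the structure group Γ/NK acts effectively on V/N by the rule NK(b+B)·Nv = N(c+Bv). -/
noncomputable section

abbrev Euc (n : ℕ) : Type := EuclideanSpace ℝ (Fin n)

abbrev AffG (n : ℕ) : Type := Euc n ≃ᵃ[ℝ] Euc n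

/-- The translation `x ↦ a + x` as an affinity of `Eⁿ`. -/
def transl {n : ℕ} (a : Euc n) : AffG n := AffineEquiv.constVAdd ℝ (Euc n) a

/-- `Span(H)` : the linear span of the translation vectors of `H`. -/
def spanOf {n : ℕ} (H : Subgroup (AffG n)) : Submodule ℝ (Euc n) :=
  Submodule.span ℝ {a : Euc n | transl a ∈ H}

/-- An `n`-space group: a group of isometries acting properly discontinuously
and cocompactly on `Eⁿ`. -/
def IsSpaceGroup {n : ℕ} (Γ : Subgroup (AffG n)) : Prop :=
  (∀ f ∈ Γ, Isometry (⇑f)) ∧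
  (∀ K : Set (Euc n), IsCompact K →
    {γ : AffG n | γ ∈ Γ ∧ ((⇑γ '' K) ∩ K).Nonempty}.Finite) ∧
  (∃ K : Set (Euc n), IsCompact K ∧ ∀ x : Euc n, ∃ γ ∈ Γ, γ x ∈ K)

/-- `N` is a complete normal subgroup of `Γ`:  it is normal in `Γ` and
equals `{a+A ∈ Γ : a ∈ V ∧ V^⊥ ⊆ Fix A}` where `V = Span N`
(for `f = a + A` we have `a = f 0` and `A = f.linear`). -/
def IsCompleteNormal {n : ℕ} (N Γ : Subgroup (AffG n)) : Prop :=
  N ≤ Γ ∧ (∀ γ ∈ Γ, ∀ ν ∈ N, γ * ν * γ⁻¹ ∈ N) ∧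
  (∀ f : AffG n, f ∈ N ↔
    f ∈ Γ ∧ f 0 ∈ spanOf N ∧ ∀ x ∈ (spanOf N)ᗮ, f.linear x = x)

/-- Membership in the kernel `K = {b+B ∈ Γ : b ∈ V^⊥ ∧ V ⊆ Fix B}`
of the action of `Γ` on `V`. -/
def InKernel {n : ℕ} (Γ : Subgroup (AffG n)) (V : Submodule ℝ (Euc n)) (f : AffG n) : Prop :=
  f ∈ Γ ∧ f 0 ∈ Vᗮ ∧ ∀ x ∈ V, f.linear x = x

end

/-!
Proper discontinuity makes `Γ`, hence `N`, countable, so `V` is covered by the countably many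
closed sets `{v ∈ V | a + A v = c + B v}`, `a + A ∈ N`. By Baire one of them has interior in `V`,
and an affine map is determined by its germ at a point, so a single `a + A ∈ N` satisfies
`a + A v = c + B v` on all of `V`. Then `(a + A)⁻¹ (b + B)` acts on `V` as the translation by
`d ∈ V^⊥`, i.e. it lies in `K`.
-/

open Filter Topology

theorem AffineEquiv.apply_add {k E F : Type*} [Ring k] [AddCommGroup E] [Module k E]
    [AddCommGroup F] [Module k F] (e : E ≃ᵃ[k] F) (p v : E) : e (p + v) = e p + e.linear v := by
  simpa [add_comm] using e.map_vadd p v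

theorem AffineMap.eq_of_eventuallyEq {𝕜 E F : Type*} [NontriviallyNormedField 𝕜]
    [AddCommGroup E] [Module 𝕜 E] [TopologicalSpace E] [IsTopologicalAddGroup E]
    [ContinuousSMul 𝕜 E] [AddCommGroup F] [Module 𝕜 F] {φ ψ : E →ᵃ[𝕜] F} {x₀ : E}
    (h : φ =ᶠ[𝓝 x₀] ψ) : φ = ψ := by
  ext y
  have hline : Tendsto (AffineMap.lineMap x₀ y : 𝕜 → E) (𝓝[≠] 0) (𝓝 x₀) := by
    simpa using (AffineMap.lineMap_continuous.tendsto (0 : 𝕜)).mono_left nhdsWithin_le_nhds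
  obtain ⟨t, ht, ht0⟩ := ((hline.eventually h).and self_mem_nhdsWithin).exists
  rw [φ.apply_lineMap, ψ.apply_lineMap, h.self_of_nhds, AffineMap.lineMap_apply_module',
    AffineMap.lineMap_apply_module'] at ht
  exact sub_left_injective (smul_right_injective F ht0 (add_right_cancel ht))

theorem AffineMap.exists_eq_of_forall_exists_eq {ι 𝕜 E F : Type*} [Countable ι]
    [NontriviallyNormedField 𝕜] [CompleteSpace 𝕜]
    [NormedAddCommGroup E] [NormedSpace 𝕜 E] [FiniteDimensional 𝕜 E]
    [NormedAddCommGroup F] [NormedSpace 𝕜 F]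
    (φ : ι → E →ᵃ[𝕜] F) (ψ : E →ᵃ[𝕜] F) (h : ∀ x, ∃ i, φ i x = ψ x) : ∃ i, φ i = ψ := by
  have := FiniteDimensional.complete 𝕜 E
  have hclosed : ∀ i, IsClosed {x | φ i x = ψ x} := fun i =>
    isClosed_eq (φ i).continuous_of_finiteDimensional ψ.continuous_of_finiteDimensional
  obtain ⟨i, x₀, hx₀⟩ := nonempty_interior_of_iUnion_of_closed hclosed (Set.iUnion_eq_univ_iff.2 h)
  exact ⟨i, AffineMap.eq_of_eventuallyEq (mem_interior_iff_mem_nhds.1 hx₀)⟩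

theorem AffineMap.exists_eqOn_of_forall_exists_eq {ι 𝕜 E F : Type*} [Countable ι]
    [NontriviallyNormedField 𝕜] [CompleteSpace 𝕜]
    [NormedAddCommGroup E] [NormedSpace 𝕜 E] [NormedAddCommGroup F] [NormedSpace 𝕜 F]
    (V : Submodule 𝕜 E) [FiniteDimensional 𝕜 V]
    (φ : ι → E →ᵃ[𝕜] F) (ψ : E →ᵃ[𝕜] F) (h : ∀ x ∈ V, ∃ i, φ i x = ψ x) :
    ∃ i, Set.EqOn (φ i) ψ V := by
  obtain ⟨i, hi⟩ := exists_eq_of_forall_exists_eq (fun i => (φ i).comp V.subtype.toAffineMap)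
    (ψ.comp V.subtype.toAffineMap) fun x => h x x.2
  exact ⟨i, fun x hx => DFunLike.congr_fun hi ⟨x, hx⟩⟩

theorem IsSpaceGroup.countable {n : ℕ} {Γ : Subgroup (AffG n)} (hΓ : IsSpaceGroup Γ) :
    (Γ : Set (AffG n)).Countable := by
  have hcover : (Γ : Set (AffG n)) ⊆ ⋃ m : ℕ, {γ : AffG n | γ ∈ Γ ∧
      ((⇑γ '' Metric.closedBall 0 m) ∩ Metric.closedBall 0 m).Nonempty} := fun γ hγ =>
    Set.mem_iUnion.2 ⟨⌈‖γ 0‖⌉₊, hγ, γ 0, ⟨0, by simp, rfl⟩, by simpa using Nat.le_ceil _⟩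
  exact (Set.countable_iUnion fun m =>
    (hΓ.2.1 _ (isCompact_closedBall _ _)).countable).mono hcover

theorem inKernel_of_forall_apply_eq_add {n : ℕ} {Γ : Subgroup (AffG n)}
    {V : Submodule ℝ (Euc n)} {k : AffG n} {d : Euc n} (hk : k ∈ Γ) (hd : d ∈ Vᗮ)
    (hkV : ∀ v ∈ V, k v = v + d) : InKernel Γ V k := by
  have hk0 : k 0 = d := by simpa using hkV 0 V.zero_mem
  refine ⟨hk, hk0 ▸ hd, fun x hx => ?_⟩
  have h := k.apply_add 0 x
  rw [zero_add, hkV x hx, hk0, add_comm] at h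
  exact (add_left_cancel h).symm

theorem stmt1_general {n : ℕ} (Γ N K : Subgroup (AffG n))
    (hΓ : IsSpaceGroup Γ) (hN : IsCompleteNormal N Γ)
    (hK : ∀ f : AffG n, f ∈ K ↔ InKernel Γ (spanOf N) f)
    (f : AffG n) (hf : f ∈ Γ) (c d : Euc n)
    (hd : d ∈ (spanOf N)ᗮ) (hcd : f 0 = c + d)
    (hfix : ∀ v ∈ spanOf N, ∃ g ∈ N, g v = c + f.linear v) :
    f ∈ N ⊔ K := by
  have : Countable N := (hΓ.countable.mono hN.1).to_subtype
  obtain ⟨⟨g, hgN⟩, hg⟩ := AffineMap.exists_eqOn_of_forall_exists_eq (spanOf N)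
    (fun g : N => (g : AffG n).toAffineMap) (.const ℝ _ c + f.linear.toLinearMap.toAffineMap)
    fun v hv => by
      obtain ⟨g, hgN, hgv⟩ := hfix v hv
      exact ⟨⟨g, hgN⟩, by simpa using hgv⟩
  have hgd : g.linear d = d := ((hN.2.2 g).1 hgN).2.2 d hd
  have hkV : ∀ v ∈ spanOf N, (g⁻¹ * f) v = v + d := fun v hv => by
    have hgv : g v = c + f.linear v := by simpa using hg hv
    have hfv : f v = g (v + d) := calc
      f v = f 0 + f.linear v := by simpa using f.apply_add 0 v
      _ = g v + g.linear d := by rw [hcd, hgv, hgd, add_right_comm]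
      _ = g (v + d) := (g.apply_add v d).symm
    exact (congrArg g.symm hfv).trans (g.symm_apply_apply _)
  have hk : g⁻¹ * f ∈ K := (hK _).2 <|
    inKernel_of_forall_apply_eq_add (Γ.mul_mem (Γ.inv_mem (hN.1 hgN)) hf) hd hkV
  simpa using Subgroup.mul_mem_sup hgN hk

/-- Theorem 6 (key step): if `b+B ∈ Γ`, `b = c + d` with `c ∈ V`, `d ∈ V^⊥`, and for every
`v ∈ V` there is `a+A ∈ N` with `a + A v = c + B v`, then `b + B ∈ NK`; consequently the
structure group `Γ/NK` acts effectively on `V/N`. -/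
theorem stmt1 {n : ℕ} (Γ N K : Subgroup (AffG n))
    (hΓ : IsSpaceGroup Γ) (hN : IsCompleteNormal N Γ)
    (hK : ∀ f : AffG n, f ∈ K ↔ InKernel Γ (spanOf N) f)
    (f : AffG n) (hf : f ∈ Γ) (c d : Euc n)
    (hc : c ∈ spanOf N) (hd : d ∈ (spanOf N)ᗮ) (hcd : f 0 = c + d)
    (hfix : ∀ v ∈ spanOf N, ∃ g ∈ N, g v = c + f.linear v) :
    f ∈ N ⊔ K :=
  stmt1_general Γ N K hΓ hN hK f hf c d hd hcd hfix
end

section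
/- Let N be a complete normal subgroup of an n-space group Γ, let V = Span(N), let K be the kernel of the action of Γ on V, let v0 ∈ V, and let Σ = {γ ∈ Γ : γ(V^⊥ + v0) = V^⊥ + v0} be the setwise stabilizer in Γ of the affine subspace V^⊥ + v0. Then: (1) N ∩ Σ = {ν ∈ N : ν(v0) = v0}; (2) K ⊆ Σ; (3) an element b+B of Γ, with b = c+d where c ∈ V and d ∈ V^⊥, lies in NΣ if and only if there exists ν ∈ N with ν(v0) = c + Bv0; (4) N ∩ Σ is finite, K has finite index in Σ, and NK has finite index in NΣ. -/
/-!
Write `V = Span N`. Conjugating translations of `N` by `γ ∈ Γ` shows that the linear part of `γ`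
preserves `V`, hence, being orthogonal, also `V^⊥`; so `γ` stabilizes `V^⊥ + v₀` exactly when
`γ v₀ - v₀ ∈ V^⊥`. Elements of `N` move `v₀` inside `V`, which gives (1); elements of `K` move it
by their translation part, which lies in `V^⊥`, giving (2); and (3) is the uniqueness of the
decomposition `Eⁿ = V ⊕ V^⊥`, using `NΣ = N * Σ` as sets. For (4): `N ∩ Σ` fixes `v₀`, so it is
finite by proper discontinuity; `K` is the subgroup of `Σ` fixing a finite basis of translation
vectors of `N`, whose images under `Σ` are translation vectors of `N` of bounded norm, hence range
over a finite set; finally `Σ/K` maps onto `NΣ/NK` since `NΣ = ΣN`.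
-/

open scoped Pointwise

namespace Subgroup

variable {G : Type*} [Group G]

theorem finiteIndex_of_finite_range {X : Type*} {H : Subgroup G} (f : G → X)
    (hf : (Set.range f).Finite) (hH : ∀ g h, f g = f h → g⁻¹ * h ∈ H) : H.FiniteIndex := by
  have : Finite (Set.range f) := hf.to_subtype
  have : Finite (G ⧸ H) := by
    refine Finite.of_surjective (fun x : Set.range f => (x.2.choose : G ⧸ H)) fun q => ?_
    induction q using QuotientGroup.induction_on with
    | H g =>
      have hg : ∃ y, f y = f g := ⟨g, rfl⟩
      exact ⟨⟨f g, hg⟩, QuotientGroup.eq.2 (hH _ _ hg.choose_spec)⟩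
  exact finiteIndex_of_finite_quotient

theorem finiteIndex_sup_subgroupOf_sup {N K B : Subgroup G} (hB : B ≤ normalizer (N : Set G))
    [(K.subgroupOf B).FiniteIndex] : ((N ⊔ K).subgroupOf (N ⊔ B)).FiniteIndex := by
  have : ((N ⊔ K).subgroupOf B).FiniteIndex := finiteIndex_of_le (subgroupOf_mono B le_sup_right)
  have : Finite ((N ⊔ B : Subgroup G) ⧸ (N ⊔ K).subgroupOf (N ⊔ B)) := by
    refine Finite.of_surjective
      (quotientSubgroupOfEmbeddingOfLE (N ⊔ K) (le_sup_right : B ≤ N ⊔ B)) fun q => ?_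
    induction q using QuotientGroup.induction_on with
    | H g =>
      obtain ⟨b, hb, ν, hν, hg⟩ : (g : G) ∈ (B : Set G) * (N : Set G) := by
        rw [← coe_mul_of_left_le_normalizer_right B N hB, sup_comm]; exact g.2
      refine ⟨(⟨b, hb⟩ : B), QuotientGroup.eq.2 ?_⟩
      rw [mem_subgroupOf]
      simpa [← hg] using mem_sup_left hν
  exact finiteIndex_of_finite_quotient

end Subgroup

namespace AffineEquiv

variable {k E : Type*} [Ring k] [AddCommGroup E] [Module k E]

theorem apply_add_eq (f : E ≃ᵃ[k] E) (x w : E) : f (x + w) = f x + f.linear w := by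
  simpa [add_comm] using f.map_vadd x w

theorem apply_eq_linear_add (f : E ≃ᵃ[k] E) (x : E) : f x = f.linear x + f 0 := by
  simpa [add_comm] using f.apply_add_eq 0 x

theorem mul_constVAdd_mul_inv (γ : E ≃ᵃ[k] E) (a : E) :
    γ * constVAdd k E a * γ⁻¹ = constVAdd k E (γ.linear a) := by
  refine AffineEquiv.ext fun x => ?_
  show γ (a + γ⁻¹ x) = γ.linear a + x
  rw [add_comm a, apply_add_eq, show γ (γ⁻¹ x) = x from γ.apply_symm_apply x, add_comm]

theorem image_setOf_add_eq_iff (f : E ≃ᵃ[k] E) {W : Submodule k E}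
    (hW : ∀ w, f.linear w ∈ W ↔ w ∈ W) (p : E) :
    f '' {x | ∃ w ∈ W, x = w + p} = {x | ∃ w ∈ W, x = w + p} ↔ f p - p ∈ W := by
  have hshift : ∀ w, f (w + p) = (f.linear w + (f p - p)) + p := fun w => by
    rw [add_comm w, apply_add_eq]; abel
  constructor
  · intro h
    obtain ⟨w, hw, hfp⟩ : f p ∈ {x | ∃ w ∈ W, x = w + p} :=
      h ▸ ⟨p, ⟨0, W.zero_mem, (zero_add p).symm⟩, rfl⟩
    simpa [hfp] using hw
  · intro hp
    ext x
    constructor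
    · rintro ⟨_, ⟨w, hw, rfl⟩, rfl⟩
      exact ⟨_, add_mem ((hW w).2 hw) hp, hshift w⟩
    · rintro ⟨w, hw, rfl⟩
      refine ⟨f.linear.symm (w - (f p - p)) + p, ⟨_, ?_, rfl⟩, ?_⟩
      · exact (hW _).1 (by simpa using sub_mem hw hp)
      · rw [hshift]; simp

end AffineEquiv

open AffineEquiv

section

variable {n : ℕ}

theorem transl_injective : Function.Injective (transl (n := n)) := fun a b h => by
  simpa [transl] using congrArg (fun f : AffG n => f 0) h

namespace IsSpaceGroup

variable {Γ : Subgroup (AffG n)} (hΓ : IsSpaceGroup Γ)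
include hΓ

theorem norm_linear_apply {γ : AffG n} (hγ : γ ∈ Γ) (x : Euc n) : ‖γ.linear x‖ = ‖x‖ := by
  rw [show γ.linear x = γ x - γ 0 by rw [apply_eq_linear_add γ x]; abel, ← dist_eq_norm,
    (hΓ.1 γ hγ).dist_eq, dist_zero_right]

theorem inner_linear_apply {γ : AffG n} (hγ : γ ∈ Γ) (x y : Euc n) :
    inner ℝ (γ.linear x) (γ.linear y) = (inner ℝ x y : ℝ) :=
  (⟨γ.linear.toLinearMap, hΓ.norm_linear_apply hγ⟩ : Euc n →ₗᵢ[ℝ] Euc n).inner_map_map x y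

theorem finite_setOf_transl_mem (R : ℝ) : {a : Euc n | transl a ∈ Γ ∧ ‖a‖ ≤ R}.Finite := by
  refine .of_finite_image ((hΓ.2.1 _ (isCompact_closedBall 0 R)).subset ?_)
    transl_injective.injOn
  rintro _ ⟨a, ⟨ha, haR⟩, rfl⟩
  refine ⟨ha, a, ⟨0, ?_, by simp [transl]⟩, mem_closedBall_zero_iff.2 haR⟩
  exact mem_closedBall_zero_iff.2 ((norm_zero (E := Euc n)).trans_le ((norm_nonneg a).trans haR))

theorem finite_setOf_apply_eq (p : Euc n) : {γ : AffG n | γ ∈ Γ ∧ γ p = p}.Finite :=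
  (hΓ.2.1 {p} isCompact_singleton).subset fun _ ⟨hγ, hγp⟩ => ⟨hγ, p, ⟨p, rfl, hγp⟩, rfl⟩

end IsSpaceGroup

namespace IsCompleteNormal

variable {Γ N : Subgroup (AffG n)}

section

variable (hN : IsCompleteNormal N Γ)
include hN

theorem le_normalizer : Γ ≤ Subgroup.normalizer (N : Set (AffG n)) :=
  Subgroup.le_normalizer_iff.2 hN.2.1

theorem linear_apply_of_mem_orthogonal {ν : AffG n} (hν : ν ∈ N) {x : Euc n}
    (hx : x ∈ (spanOf N)ᗮ) : ν.linear x = x :=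
  ((hN.2.2 ν).1 hν).2.2 x hx

theorem transl_linear_mem {γ : AffG n} (hγ : γ ∈ Γ) {a : Euc n} (ha : transl a ∈ N) :
    transl (γ.linear a) ∈ N := by
  rw [transl, ← mul_constVAdd_mul_inv]
  exact hN.2.1 γ hγ _ ha

theorem linear_mem_spanOf {γ : AffG n} (hγ : γ ∈ Γ) {x : Euc n} (hx : x ∈ spanOf N) :
    γ.linear x ∈ spanOf N :=
  (Submodule.span_le (p := (spanOf N).comap γ.linear.toLinearMap)).2
    (fun _ ha => Submodule.subset_span (hN.transl_linear_mem hγ ha)) hx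

theorem apply_mem_spanOf {ν : AffG n} (hν : ν ∈ N) {x : Euc n} (hx : x ∈ spanOf N) :
    ν x ∈ spanOf N := by
  rw [apply_eq_linear_add]
  exact add_mem (hN.linear_mem_spanOf (hN.1 hν) hx) ((hN.2.2 ν).1 hν).2.1

theorem linear_mem_orthogonal (hΓ : IsSpaceGroup Γ) {γ : AffG n} (hγ : γ ∈ Γ) {x : Euc n}
    (hx : x ∈ (spanOf N)ᗮ) : γ.linear x ∈ (spanOf N)ᗮ := by
  refine (Submodule.mem_orthogonal _ _).2 fun u hu => ?_
  have hu' : (γ⁻¹).linear u ∈ spanOf N := hN.linear_mem_spanOf (inv_mem hγ) hu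
  calc inner ℝ u (γ.linear x)
      = inner ℝ (γ.linear ((γ⁻¹).linear u)) (γ.linear x) := by
        rw [show γ.linear ((γ⁻¹).linear u) = u from γ.linear.apply_symm_apply u]
    _ = 0 := by rw [hΓ.inner_linear_apply hγ]; exact (Submodule.mem_orthogonal _ _).1 hx _ hu'

theorem linear_mem_orthogonal_iff (hΓ : IsSpaceGroup Γ) {γ : AffG n} (hγ : γ ∈ Γ) (x : Euc n) :
    γ.linear x ∈ (spanOf N)ᗮ ↔ x ∈ (spanOf N)ᗮ := by
  refine ⟨fun h => ?_, hN.linear_mem_orthogonal hΓ hγ⟩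
  simpa [show (γ⁻¹).linear (γ.linear x) = x from γ.linear.symm_apply_apply x]
    using hN.linear_mem_orthogonal hΓ (inv_mem hγ) h

end

theorem image_setOf_add_eq_iff (hΓ : IsSpaceGroup Γ) (hN : IsCompleteNormal N Γ) {γ : AffG n}
    (hγ : γ ∈ Γ) (v0 : Euc n) :
    ⇑γ '' {x : Euc n | ∃ w ∈ (spanOf N)ᗮ, x = w + v0} =
        {x : Euc n | ∃ w ∈ (spanOf N)ᗮ, x = w + v0} ↔ γ v0 - v0 ∈ (spanOf N)ᗮ :=
  γ.image_setOf_add_eq_iff (hN.linear_mem_orthogonal_iff hΓ hγ) v0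

section Stabilizer

variable {Sg : Subgroup (AffG n)} {v0 : Euc n}
variable (hv0 : v0 ∈ spanOf N) (hSg : ∀ f, f ∈ Sg ↔ f ∈ Γ ∧ f v0 - v0 ∈ (spanOf N)ᗮ)
include hv0 hSg

theorem le_of_inKernel {K : Subgroup (AffG n)} (hK : ∀ f, f ∈ K ↔ InKernel Γ (spanOf N) f) :
    K ≤ Sg := by
  intro k hk
  obtain ⟨hkΓ, hk0, hkfix⟩ := (hK k).1 hk
  refine (hSg k).2 ⟨hkΓ, ?_⟩
  rwa [apply_eq_linear_add, hkfix v0 hv0, add_sub_cancel_left]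

theorem inKernel_of_linear_apply {g : AffG n} (hg : g ∈ Sg)
    (hfix : ∀ x ∈ spanOf N, g.linear x = x) : InKernel Γ (spanOf N) g := by
  obtain ⟨hgΓ, hperp⟩ := (hSg g).1 hg
  refine ⟨hgΓ, ?_, hfix⟩
  rwa [apply_eq_linear_add, hfix v0 hv0, add_sub_cancel_left] at hperp

variable (hN : IsCompleteNormal N Γ)
include hN

theorem mem_inf_iff (f : AffG n) : f ∈ N ⊓ Sg ↔ f ∈ N ∧ f v0 = v0 := by
  rw [Subgroup.mem_inf, hSg]
  refine and_congr_right fun hf => ⟨fun ⟨_, hperp⟩ => ?_, fun hfix => ⟨hN.1 hf, by simp [hfix]⟩⟩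
  have hV : f v0 - v0 ∈ spanOf N := sub_mem (hN.apply_mem_spanOf hf hv0) hv0
  exact sub_eq_zero.1 (Submodule.disjoint_def.1 (spanOf N).orthogonal_disjoint _ hV hperp)

theorem mem_sup_iff {f : AffG n} (hf : f ∈ Γ) {c d : Euc n} (hc : c ∈ spanOf N)
    (hd : d ∈ (spanOf N)ᗮ) (hf0 : f 0 = c + d) :
    f ∈ N ⊔ Sg ↔ ∃ ν ∈ N, ν v0 = c + f.linear v0 := by
  have hSgΓ : Sg ≤ Γ := fun σ hσ => ((hSg σ).1 hσ).1
  have hfv0 : f v0 = (c + f.linear v0) + d := by rw [apply_eq_linear_add, hf0]; abel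
  rw [← SetLike.mem_coe, Subgroup.coe_mul_of_right_le_normalizer_left N Sg
    (hSgΓ.trans hN.le_normalizer)]
  constructor
  · rintro ⟨ν, hν, σ, hσ, rfl⟩
    have hw := ((hSg σ).1 hσ).2
    -- `ν` fixes the `V^⊥`-component `σ v0 - v0`
    have hsplit : ν v0 + (σ v0 - v0) = (c + (ν * σ).linear v0) + d := by
      rw [← hfv0, AffineEquiv.coe_mul, Function.comp_apply, ← add_sub_cancel v0 (σ v0),
        apply_add_eq, hN.linear_apply_of_mem_orthogonal hν hw, add_sub_cancel_left]
    have hV : ν v0 - (c + (ν * σ).linear v0) ∈ spanOf N :=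
      sub_mem (hN.apply_mem_spanOf hν hv0) (add_mem hc (hN.linear_mem_spanOf hf hv0))
    have hperp : ν v0 - (c + (ν * σ).linear v0) ∈ (spanOf N)ᗮ := by
      rw [show ν v0 - (c + (ν * σ).linear v0) = d - (σ v0 - v0) by
        rw [sub_eq_sub_iff_add_eq_add, hsplit, add_comm]]
      exact sub_mem hd hw
    exact ⟨ν, hν,
      sub_eq_zero.1 (Submodule.disjoint_def.1 (spanOf N).orthogonal_disjoint _ hV hperp)⟩
  · rintro ⟨ν, hν, hνv0⟩
    refine ⟨ν, hν, ν⁻¹ * f, (hSg _).2 ⟨mul_mem (inv_mem (hN.1 hν)) hf, ?_⟩,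
      mul_inv_cancel_left ν f⟩
    have : (ν⁻¹ * f) v0 = v0 + d := by
      rw [AffineEquiv.coe_mul, Function.comp_apply, hfv0, ← hνv0, apply_add_eq,
        show ν⁻¹ (ν v0) = v0 from ν.symm_apply_apply v0,
        hN.linear_apply_of_mem_orthogonal (inv_mem hν) hd]
    rwa [this, add_sub_cancel_left]

theorem finite_inf (hΓ : IsSpaceGroup Γ) : ((N ⊓ Sg : Subgroup (AffG n)) : Set (AffG n)).Finite :=
  (hΓ.finite_setOf_apply_eq v0).subset fun f hf =>
    have hf' := (mem_inf_iff hv0 hSg hN f).1 hf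
    ⟨hN.1 hf'.1, hf'.2⟩

theorem finiteIndex_subgroupOf (hΓ : IsSpaceGroup Γ) {K : Subgroup (AffG n)}
    (hK : ∀ f, f ∈ K ↔ InKernel Γ (spanOf N) f) : (K.subgroupOf Sg).FiniteIndex := by
  have hSgΓ : Sg ≤ Γ := fun σ hσ => ((hSg σ).1 hσ).1
  obtain ⟨b, hbN, hbspan, hbli⟩ := exists_linearIndependent ℝ {a : Euc n | transl a ∈ N}
  have hbfin : b.Finite := hbli.setFinite
  have : Finite b := hbfin.to_subtype
  obtain ⟨R, hR⟩ := (hbfin.image norm).bddAbove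
  have hF : {a : Euc n | transl a ∈ N ∧ ‖a‖ ≤ R}.Finite :=
    (hΓ.finite_setOf_transl_mem R).subset fun a ha => ⟨hN.1 ha.1, ha.2⟩
  refine Subgroup.finiteIndex_of_finite_range (fun (σ : Sg) (a : b) => (σ : AffG n).linear a)
    ((Set.Finite.pi fun _ => hF).subset ?_) fun σ τ hστ => ?_
  · rintro _ ⟨σ, rfl⟩ a -
    refine ⟨hN.transl_linear_mem (hSgΓ σ.2) (hbN a.2), ?_⟩
    rw [hΓ.norm_linear_apply (hSgΓ σ.2)]
    exact hR ⟨a, a.2, rfl⟩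
  · refine (hK _).2 (inKernel_of_linear_apply hv0 hSg (mul_mem (inv_mem σ.2) τ.2) fun x hx => ?_)
    have hb : Set.EqOn ((σ⁻¹ * τ : Sg) : AffG n).linear.toLinearMap
        (LinearMap.id : Euc n →ₗ[ℝ] Euc n) b := fun a ha => by
      show (σ : AffG n).linear.symm ((τ : AffG n).linear a) = a
      rw [← congrFun hστ ⟨a, ha⟩]
      exact LinearEquiv.symm_apply_apply _ a
    exact LinearMap.eqOn_span' hb (by rwa [hbspan])

end Stabilizer

end IsCompleteNormal

end

/-- Lemma 2: properties of the stabilizer `Σ` in `Γ` of the affine subspace `V^⊥ + v₀`. -/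
theorem stmt2 {n : ℕ} (Γ N K Sg : Subgroup (AffG n))
    (hΓ : IsSpaceGroup Γ) (hN : IsCompleteNormal N Γ)
    (hK : ∀ f : AffG n, f ∈ K ↔ InKernel Γ (spanOf N) f)
    (v0 : Euc n) (hv0 : v0 ∈ spanOf N)
    (hSg : ∀ f : AffG n, f ∈ Sg ↔ f ∈ Γ ∧
      ⇑f '' {x : Euc n | ∃ w ∈ (spanOf N)ᗮ, x = w + v0} =
        {x : Euc n | ∃ w ∈ (spanOf N)ᗮ, x = w + v0}) :
    (∀ f : AffG n, f ∈ N ⊓ Sg ↔ f ∈ N ∧ f v0 = v0) ∧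
    K ≤ Sg ∧
    (∀ f ∈ Γ, ∀ c d : Euc n, c ∈ spanOf N → d ∈ (spanOf N)ᗮ → f 0 = c + d →
      (f ∈ N ⊔ Sg ↔ ∃ ν ∈ N, ν v0 = c + f.linear v0)) ∧
    ((N ⊓ Sg : Subgroup (AffG n)) : Set (AffG n)).Finite ∧
    (K.subgroupOf Sg).FiniteIndex ∧
    ((N ⊔ K).subgroupOf (N ⊔ Sg)).FiniteIndex := by
  have hSg' : ∀ f, f ∈ Sg ↔ f ∈ Γ ∧ f v0 - v0 ∈ (spanOf N)ᗮ := fun f => by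
    rw [hSg]
    exact and_congr_right fun hf => hN.image_setOf_add_eq_iff hΓ hf v0
  have hKSg : (K.subgroupOf Sg).FiniteIndex := hN.finiteIndex_subgroupOf hv0 hSg' hΓ hK
  refine ⟨hN.mem_inf_iff hv0 hSg', IsCompleteNormal.le_of_inKernel hv0 hSg' hK,
    fun f hf c d hc hd hf0 => hN.mem_sup_iff hv0 hSg' hf hc hd hf0, hN.finite_inf hv0 hSg' hΓ,
    hKSg, Subgroup.finiteIndex_sup_subgroupOf_sup fun σ hσ => hN.le_normalizer ((hSg' σ).1 hσ).1⟩
end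

section
/- Let Γ be an n-space group, let Z(Γ) be its center, let V = Span(Z(Γ)), and let N = {b+B ∈ Γ : b ∈ V^⊥ and V ⊆ Fix(B)} be the kernel of the action of Γ on V; assume Span(N) = V^⊥ (so that N is the orthogonal dual Z(Γ)^⊥). Then there exists a subgroup Σ of Γ with Γ = Z(Γ)Σ and Z(Γ) ∩ Σ = {I} (that is, the space group extension 1 → Z(Γ) → Γ → Γ/Z(Γ) → 1 splits) if and only if Γ = Z(Γ)N (that is, the structure group Γ/Z(Γ)N is trivial). -/
/-!
The linear parts of elements of `Γ` fix `V = Span Z(Γ)` pointwise and permute the translations of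
`Γ` of any given length. These are finitely many, and the translations of `Z(Γ)` and `N` span
`V ⊕ V^⊥`, so the point group is finite. For a complement `Σ` (normal, as `Z(Γ)` is central),
averaging a translation of `Σ` over the point group gives a central translation of `Σ`, hence `0`;
as the point group fixes `V`, the translations of `Σ` lie in `V^⊥`. For `s ∈ Σ` some power `s ^ m`
is a translation, and its `V`-component is `m` times that of `s 0`, so `s ∈ N`. Conversely `N` is a
complement once `Z(Γ) ∩ N = 1`: a central element of `N` has linear part fixing `V` and
`Span N = V^⊥`, so it is a translation by a vector of `V ∩ V^⊥`.
-/

open scoped RealInnerProductSpace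

theorem AffineEquiv.apply_eq_linear_add_s5 {k V : Type*} [Ring k] [AddCommGroup V] [Module k V]
    (f : V ≃ᵃ[k] V) (x : V) : f x = f.linear x + f 0 :=
  congrFun (AffineMap.decomp f.toAffineMap) x

theorem AffineEquiv.map_pow_apply_zero {k V W : Type*} [Ring k] [AddCommGroup V] [Module k V]
    [AddCommGroup W] [Module k W] (f : V ≃ᵃ[k] V) {φ : V →ₗ[k] W}
    (hφ : ∀ x, φ (f.linear x) = φ x) (j : ℕ) : φ ((f ^ j) 0) = j • φ (f 0) := by
  induction j with
  | zero => rw [pow_zero, zero_smul]; exact φ.map_zero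
  | succ j ih =>
    rw [pow_succ', AffineEquiv.mul_def, AffineEquiv.trans_apply, f.apply_eq_linear_add_s5, map_add, hφ,
      ih, succ_nsmul]

theorem AffineEquiv.norm_linear_apply {E : Type*} [NormedAddCommGroup E] [NormedSpace ℝ E]
    {f : E ≃ᵃ[ℝ] E} (hf : Isometry f) (x : E) : ‖f.linear x‖ = ‖x‖ := by
  rw [← dist_zero_right, ← dist_zero_right x, ← hf.dist_eq x 0, f.apply_eq_linear_add_s5 x,
    dist_eq_norm, dist_eq_norm, add_sub_cancel_right, sub_zero]

theorem AffineEquiv.inner_linear_apply {E : Type*} [NormedAddCommGroup E] [InnerProductSpace ℝ E]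
    {f : E ≃ᵃ[ℝ] E} (hf : Isometry f) (x y : E) : ⟪f.linear x, f.linear y⟫ = ⟪x, y⟫ :=
  LinearIsometry.inner_map_map ⟨f.linear.toLinearMap, f.norm_linear_apply hf⟩ x y

theorem LinearMap.finite_setOf_forall_apply_mem {K E F : Type*} [DivisionRing K] [AddCommGroup E]
    [Module K E] [Module.Finite K E] [AddCommGroup F] [Module K F] {W : Set E}
    (hW : Submodule.span K W = ⊤) {D : E → Set F} (hD : ∀ w ∈ W, (D w).Finite) :
    {L : E →ₗ[K] F | ∀ w ∈ W, L w ∈ D w}.Finite := by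
  obtain ⟨b, hbW, hbspan, hb⟩ := exists_linearIndependent K W
  have : Finite b := hb.finite
  refine Set.Finite.of_finite_image (f := fun L (t : b) => L t) ?_ fun L _ L' _ h =>
    LinearMap.ext_on (hbspan.trans hW) fun x hx => congrFun h ⟨x, hx⟩
  refine (Set.Finite.pi (t := fun t : b => D t) fun t => hD t (hbW t.2)).subset ?_
  rintro _ ⟨L, hL, rfl⟩ t -
  exact hL t (hbW t.2)

theorem LinearEquiv.apply_sum_eq_of_mem {K E : Type*} [Semiring K] [AddCommMonoid E] [Module K E]
    {P : Subgroup (E ≃ₗ[K] E)} [Fintype P] {L : E ≃ₗ[K] E} (hL : L ∈ P) (x : E) :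
    L (∑ M : P, (M : E ≃ₗ[K] E) x) = ∑ M : P, (M : E ≃ₗ[K] E) x := by
  rw [map_sum]
  exact Fintype.sum_equiv (Equiv.mulLeft ⟨L, hL⟩) _ _ fun M => rfl

namespace SpaceGroup

variable {n : ℕ}

theorem transl_apply (a x : Euc n) : transl a x = a + x := rfl

theorem transl_add (a b : Euc n) : transl (a + b) = transl a * transl b :=
  AffineEquiv.constVAdd_add ℝ (Euc n) a b

theorem transl_zero : transl (0 : Euc n) = 1 :=
  AffineEquiv.constVAdd_zero ℝ (Euc n)

theorem transl_neg (a : Euc n) : transl (-a) = (transl a)⁻¹ :=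
  eq_inv_of_mul_eq_one_left (by rw [← transl_add, neg_add_cancel, transl_zero])

theorem transl_injective : Function.Injective (transl (n := n)) := fun a b h => by
  have h0 := DFunLike.congr_fun h 0
  rwa [transl_apply, transl_apply, add_zero, add_zero] at h0

theorem mul_transl (γ : AffG n) (a : Euc n) : γ * transl a = transl (γ.linear a) * γ := by
  refine AffineEquiv.ext fun x => ?_
  show γ (a + x) = γ.linear a + γ x
  rw [γ.apply_eq_linear_add_s5 (a + x), γ.apply_eq_linear_add_s5 x, map_add, add_assoc]

theorem conj_transl (γ : AffG n) (a : Euc n) : γ * transl a * γ⁻¹ = transl (γ.linear a) := by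
  rw [mul_transl, mul_inv_cancel_right]

theorem transl_mul_comm_iff {γ : AffG n} {a : Euc n} :
    transl a * γ = γ * transl a ↔ γ.linear a = a := by
  rw [mul_transl, mul_left_inj, transl_injective.eq_iff, eq_comm]

theorem eq_transl_of_linear_eq_one {f : AffG n} (h : f.linear = 1) : f = transl (f 0) := by
  refine AffineEquiv.ext fun x => ?_
  rw [f.apply_eq_linear_add_s5, h, transl_apply, add_comm]
  rfl

def translations (G : Subgroup (AffG n)) : AddSubgroup (Euc n) where
  carrier := {a | transl a ∈ G}
  add_mem' {a b} ha hb := show transl (a + b) ∈ G by rw [transl_add]; exact mul_mem ha hb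
  zero_mem' := show transl 0 ∈ G by rw [transl_zero]; exact one_mem G
  neg_mem' {a} ha := show transl (-a) ∈ G by rw [transl_neg]; exact inv_mem ha

theorem mem_translations {G : Subgroup (AffG n)} {a : Euc n} :
    a ∈ translations G ↔ transl a ∈ G :=
  Iff.rfl

theorem linear_apply_mem_translations {G Γ : Subgroup (AffG n)}
    (hΓ : Γ ≤ Subgroup.normalizer (G : Set (AffG n))) {γ : AffG n} (hγ : γ ∈ Γ) {a : Euc n}
    (ha : a ∈ translations G) : γ.linear a ∈ translations G := by
  rw [mem_translations, ← conj_transl]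
  exact (Subgroup.mem_normalizer_iff.mp (hΓ hγ) _).mp ha

noncomputable def pointGroup (Γ : Subgroup (AffG n)) : Subgroup (Euc n ≃ₗ[ℝ] Euc n) :=
  Γ.map AffineEquiv.linearHom

theorem linear_mem_pointGroup {Γ : Subgroup (AffG n)} {γ : AffG n} (hγ : γ ∈ Γ) :
    γ.linear ∈ pointGroup Γ :=
  ⟨γ, hγ, rfl⟩

theorem finite_setOf_mem_translations_norm_le {Γ : Subgroup (AffG n)} (hΓ : IsSpaceGroup Γ)
    (R : ℝ) : {a | a ∈ translations Γ ∧ ‖a‖ ≤ R}.Finite := by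
  refine ((hΓ.2.1 _ (isCompact_closedBall 0 R)).preimage transl_injective.injOn).subset ?_
  rintro a ⟨ha, haR⟩
  refine ⟨ha, a, ⟨0, ?_, ?_⟩, ?_⟩
  · simpa using (norm_nonneg a).trans haR
  · simp [transl_apply]
  · simpa using haR

theorem finite_pointGroup {Γ : Subgroup (AffG n)} (hΓ : IsSpaceGroup Γ)
    (hspan : Submodule.span ℝ (translations Γ : Set (Euc n)) = ⊤) :
    (pointGroup Γ : Set (Euc n ≃ₗ[ℝ] Euc n)).Finite := by
  refine ((LinearMap.finite_setOf_forall_apply_mem hspan fun w _ =>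
    finite_setOf_mem_translations_norm_le hΓ ‖w‖).preimage
    LinearEquiv.toLinearMap_injective.injOn).subset ?_
  rintro _ ⟨γ, hγ, rfl⟩ w hw
  exact ⟨linear_apply_mem_translations Γ.le_normalizer hγ hw,
    (AffineEquiv.norm_linear_apply (hΓ.1 γ hγ) w).le⟩

section Complement

variable {Γ S : Subgroup (AffG n)} [Finite (pointGroup Γ)] {W : Type*} [AddCommGroup W]
  [Module ℝ W] {φ : Euc n →ₗ[ℝ] W}
  (hS : Γ ≤ Subgroup.normalizer (S : Set (AffG n)))
  (hfix : ∀ b ∈ translations S, (∀ L ∈ pointGroup Γ, L b = b) → b = 0)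
  (hφ : ∀ L ∈ pointGroup Γ, ∀ x, φ (L x) = φ x)
include hS hfix hφ

theorem map_eq_zero_of_mem_translations {a : Euc n} (ha : a ∈ translations S) : φ a = 0 := by
  have := Fintype.ofFinite (pointGroup Γ)
  have hsum : ∑ L : pointGroup Γ, (L : Euc n ≃ₗ[ℝ] Euc n) a = 0 := by
    refine hfix _ (AddSubgroup.sum_mem _ fun L _ => ?_) fun L hL => L.apply_sum_eq_of_mem hL a
    obtain ⟨γ, hγ, hL⟩ := L.2
    rw [← hL]
    exact linear_apply_mem_translations hS hγ ha
  have hφsum := congrArg φ hsum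
  rw [map_sum, Finset.sum_congr rfl fun L _ => hφ _ L.2 a, Finset.sum_const, map_zero,
    ← Nat.cast_smul_eq_nsmul ℝ, smul_eq_zero, Nat.cast_eq_zero] at hφsum
  exact hφsum.resolve_left Finset.univ_nonempty.card_pos.ne'

theorem map_apply_zero_eq_zero (hSΓ : S ≤ Γ) {s : AffG n} (hs : s ∈ S) : φ (s 0) = 0 := by
  let L : pointGroup Γ := ⟨s.linear, linear_mem_pointGroup (hSΓ hs)⟩
  have hlin : (s ^ orderOf L).linear = 1 := by
    have h := pow_orderOf_eq_one L
    rw [Subtype.ext_iff, Subgroup.coe_pow] at h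
    exact (map_pow AffineEquiv.linearHom s _).trans h
  have hsm : φ ((s ^ orderOf L) 0) = 0 := by
    refine map_eq_zero_of_mem_translations hS hfix hφ ?_
    rw [mem_translations, ← eq_transl_of_linear_eq_one hlin]
    exact pow_mem hs _
  rw [s.map_pow_apply_zero (hφ _ L.2), ← Nat.cast_smul_eq_nsmul ℝ, smul_eq_zero,
    Nat.cast_eq_zero] at hsm
  exact hsm.resolve_left (orderOf_pos _).ne'

end Complement

section Center

variable {Γ Z N : Subgroup (AffG n)}
  (hZ : ∀ f : AffG n, f ∈ Z ↔ f ∈ Γ ∧ ∀ γ ∈ Γ, f * γ = γ * f)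
include hZ

theorem linear_apply_eq_of_mem_spanOf_center {γ : AffG n} (hγ : γ ∈ Γ) {v : Euc n}
    (hv : v ∈ spanOf Z) : γ.linear v = v :=
  LinearMap.eqOn_span (f := γ.linear.toLinearMap) (g := LinearMap.id)
    (fun _ ha => transl_mul_comm_iff.mp (((hZ _).mp ha).2 γ hγ)) hv

theorem transl_mem_center {b : Euc n} (hb : b ∈ translations Γ)
    (hfix : ∀ γ ∈ Γ, γ.linear b = b) : transl b ∈ Z :=
  (hZ _).mpr ⟨hb, fun γ hγ => transl_mul_comm_iff.mpr (hfix γ hγ)⟩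

variable (hN : ∀ f : AffG n, f ∈ N ↔ InKernel Γ (spanOf Z) f)
  (hdual : spanOf N = (spanOf Z)ᗮ)
include hN hdual

theorem span_translations_eq_top : Submodule.span ℝ (translations Γ : Set (Euc n)) = ⊤ := by
  rw [eq_top_iff, ← (spanOf Z).sup_orthogonal_of_hasOrthogonalProjection, ← hdual]
  exact sup_le (Submodule.span_mono fun _ ha => ((hZ _).mp ha).1)
    (Submodule.span_mono fun _ ha => ((hN _).mp ha).1)

theorem center_inf_eq_bot : Z ⊓ N = ⊥ := by
  refine eq_bot_iff.mpr fun f ⟨hfZ, hfN⟩ => ?_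
  obtain ⟨-, hf0, hfV⟩ := (hN f).mp hfN
  have hfV' : ∀ w ∈ spanOf N, f.linear w = w :=
    LinearMap.eqOn_span (f := f.linear.toLinearMap) (g := LinearMap.id) fun _ hw =>
      transl_mul_comm_iff.mp (((hZ f).mp hfZ).2 _ ((hN _).mp hw).1).symm
  have hlin : f.linear = 1 := LinearEquiv.ext fun x => by
    have hx : x ∈ spanOf Z ⊔ spanOf N := by
      rw [hdual, (spanOf Z).sup_orthogonal_of_hasOrthogonalProjection]
      exact Submodule.mem_top
    obtain ⟨v, hv, w, hw, rfl⟩ := Submodule.mem_sup.mp hx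
    rw [map_add, hfV v hv, hfV' w hw]
    rfl
  have hf := eq_transl_of_linear_eq_one hlin
  have hf0Z : f 0 ∈ spanOf Z := Submodule.subset_span (show transl (f 0) ∈ Z from hf ▸ hfZ)
  have hf00 : f 0 = 0 := by
    simpa [(spanOf Z).inf_orthogonal_eq_bot] using Submodule.mem_inf.mpr ⟨hf0Z, hf0⟩
  rw [Subgroup.mem_bot, hf, hf00, transl_zero]

theorem le_kernel_of_sup_eq_of_inf_eq_bot (hΓ : IsSpaceGroup Γ) {S : Subgroup (AffG n)}
    (hSΓ : S ≤ Γ) (hsup : Z ⊔ S = Γ) (hinf : Z ⊓ S = ⊥) : S ≤ N := by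
  have : Finite (pointGroup Γ) :=
    (finite_pointGroup hΓ (span_translations_eq_top hZ hN hdual)).to_subtype
  have hZS : Z ≤ Subgroup.centralizer (S : Set (AffG n)) := fun z hz =>
    Subgroup.mem_centralizer_iff.mpr fun s hs => (((hZ z).mp hz).2 s (hSΓ hs)).symm
  have hS : Γ ≤ Subgroup.normalizer (S : Set (AffG n)) :=
    hsup ▸ sup_le (hZS.trans (Subgroup.centralizer_le_normalizer _)) Subgroup.le_normalizer
  have hfix : ∀ b ∈ translations S, (∀ L ∈ pointGroup Γ, L b = b) → b = 0 := by
    refine fun b hb hb' => transl_injective ?_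
    rw [transl_zero, ← Subgroup.mem_bot, ← hinf]
    exact ⟨transl_mem_center hZ (hSΓ hb) fun γ hγ => hb' _ (linear_mem_pointGroup hγ), hb⟩
  intro s hs
  refine (hN s).mpr ⟨hSΓ hs, (Submodule.mem_orthogonal _ _).mpr fun v hv => ?_,
    fun x hx => linear_apply_eq_of_mem_spanOf_center hZ (hSΓ hs) hx⟩
  refine map_apply_zero_eq_zero (φ := innerₛₗ ℝ v) hS hfix ?_ hSΓ hs
  rintro _ ⟨γ, hγ, rfl⟩ x
  show ⟪v, γ.linear x⟫ = ⟪v, x⟫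
  conv_lhs => rw [← linear_apply_eq_of_mem_spanOf_center hZ hγ hv]
  exact γ.inner_linear_apply (hΓ.1 γ hγ) v x

end Center

end SpaceGroup

/-- Theorem 9: the extension `1 → Z(Γ) → Γ → Γ/Z(Γ) → 1` splits iff `Γ = Z(Γ) N`,
where `N = Z(Γ)^⊥` is the kernel of the action of `Γ` on `V = Span Z(Γ)`. -/
theorem stmt5 {n : ℕ} (Γ Z N : Subgroup (AffG n)) (hΓ : IsSpaceGroup Γ)
    (hZ : ∀ f : AffG n, f ∈ Z ↔ f ∈ Γ ∧ ∀ γ ∈ Γ, f * γ = γ * f)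
    (hN : ∀ f : AffG n, f ∈ N ↔ InKernel Γ (spanOf Z) f)
    (hdual : spanOf N = (spanOf Z)ᗮ) :
    (∃ Sg : Subgroup (AffG n), Sg ≤ Γ ∧ Z ⊔ Sg = Γ ∧ Z ⊓ Sg = ⊥) ↔ Z ⊔ N = Γ := by
  have hZΓ : Z ≤ Γ := fun f hf => ((hZ f).mp hf).1
  have hNΓ : N ≤ Γ := fun f hf => ((hN f).mp hf).1
  constructor
  · rintro ⟨S, hSΓ, hsup, hinf⟩
    refine le_antisymm (sup_le hZΓ hNΓ) ?_
    calc Γ = Z ⊔ S := hsup.symm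
      _ ≤ Z ⊔ N := sup_le_sup_left
          (SpaceGroup.le_kernel_of_sup_eq_of_inf_eq_bot hZ hN hdual hΓ hSΓ hsup hinf) Z
  · intro hZN
    exact ⟨N, hNΓ, hZN, SpaceGroup.center_inf_eq_bot hZ hN hdual⟩
end

section
/- Let N be a complete normal subgroup of an n-space group Γ with V = Span(N), and suppose the space group extension 1 → N → Γ → Γ/N → 1 splits, i.e. there is a subgroup Σ of Γ with Γ = NΣ and N ∩ Σ = {I}. If b+B ∈ Γ is such that the coset N(b+B) has finite order in Γ/N, then, writing b = c+d with c ∈ V and d ∈ V^⊥, there exist v ∈ V and ν ∈ N with ν(v) = c + Bv (that is, the induced element of the structure group fixes the point Nv of V/N). -/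
/-! Write `f = νσ` with `ν ∈ N` and `σ` in the complement `Σ`. As `N ∩ Σ = 1`, the element `σ`
has finite order, so it fixes the centroid `w` of one of its orbits, and `f w = ν w`. Split
`w = v + u` along `V ⊕ V^⊥`: the linear part of `ν` fixes `V^⊥` pointwise and the linear part of
`f` preserves both `V` and `V^⊥` (it is orthogonal and normalizes `N`), so comparing the
`V`-components of `f w = ν w` gives `ν v = c + B v`. -/

open Subgroup
open scoped Pointwise

theorem AffineEquiv.exists_apply_eq_self_of_isOfFinOrder {k V P : Type*} [DivisionRing k]
    [CharZero k] [AddCommGroup V] [Module k V] [AddTorsor V P] [Nonempty P] {σ : P ≃ᵃ[k] P}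
    (hσ : IsOfFinOrder σ) : ∃ q, σ q = q := by
  obtain ⟨p⟩ := ‹Nonempty P›
  set m := orderOf σ
  have : NeZero m := ⟨hσ.orderOf_pos.ne'⟩
  let orbit : Fin m → P := fun i => (σ ^ (i : ℕ)) p
  have hweights : ∑ i, (Finset.univ : Finset (Fin m)).centroidWeights k i = 1 :=
    Finset.sum_centroidWeights_eq_one_of_card_ne_zero _ _ (by simp [NeZero.ne m])
  have hshift : σ ∘ orbit = orbit ∘ Equiv.addRight 1 := by
    funext i
    simp only [Function.comp_apply, Equiv.coe_addRight, orbit, Fin.val_add]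
    rw [Fin.val_one', Nat.add_mod_mod, pow_mod_orderOf, pow_succ']
    rfl
  refine ⟨Finset.univ.centroid k orbit, ?_⟩
  rw [Finset.centroid, ← AffineEquiv.coe_toAffineMap,
    Finset.map_affineCombination _ _ _ hweights, AffineEquiv.coe_toAffineMap, hshift,
    ← Finset.centroid, ← Finset.centroid, ← Equiv.coe_toEmbedding, ← Finset.centroid_map,
    Finset.map_univ_equiv]

theorem AffineEquiv.conj_constVAdd {k V P : Type*} [Ring k] [AddCommGroup V] [Module k V]
    [AddTorsor V P] (γ : P ≃ᵃ[k] P) (a : V) :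
    γ * AffineEquiv.constVAdd k P a * γ⁻¹ = AffineEquiv.constVAdd k P (γ.linear a) := by
  ext x
  simp [AffineEquiv.mul_def, AffineEquiv.inv_def, AffineEquiv.map_vadd]

theorem Subgroup.mul_pow_mul_inv_pow_mem {G : Type*} [Group G] {N : Subgroup G} {ν σ : G}
    (hν : ν ∈ N) (hσ : σ ∈ normalizer (N : Set G)) (k : ℕ) :
    (ν * σ) ^ k * (σ ^ k)⁻¹ ∈ N := by
  induction k with
  | zero => simp
  | succ k ih =>
    have hconj : σ ^ k * ν * (σ ^ k)⁻¹ ∈ N :=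
      (mem_normalizer_iff.mp (pow_mem hσ k) ν).mp hν
    convert mul_mem ih hconj using 1
    rw [pow_succ, pow_succ, mul_inv_rev]
    simp only [mul_assoc, mul_inv_cancel_left, inv_mul_cancel_left]

section

variable {E : Type*} [NormedAddCommGroup E] [InnerProductSpace ℝ E]

theorem AffineEquiv.apply_eq_linear_add_s7 (f : E ≃ᵃ[ℝ] E) (x : E) : f x = f.linear x + f 0 := by
  simpa using f.map_vadd 0 x

def AffineEquiv.linearIsometryEquivOfIsometry (f : E ≃ᵃ[ℝ] E) (hf : Isometry f) :
    E ≃ₗᵢ[ℝ] E :=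
  { f.linear with
    norm_map' := fun x => by
      have := hf.dist_eq x 0
      rwa [dist_eq_norm, dist_eq_norm, f.apply_eq_linear_add_s7 x, add_sub_cancel_right,
        sub_zero] at this }

theorem AffineEquiv.map_linear_orthogonal_le [FiniteDimensional ℝ E] {f : E ≃ᵃ[ℝ] E}
    (hf : Isometry f) {K : Submodule ℝ E} (hK : K.map (f.linear : E →ₗ[ℝ] E) ≤ K) :
    Kᗮ.map (f.linear : E →ₗ[ℝ] E) ≤ Kᗮ := by
  have hKeq : K.map (f.linear : E →ₗ[ℝ] E) = K :=
    Submodule.eq_of_le_of_finrank_le hK (LinearEquiv.finrank_map_eq _ _).ge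
  exact ((Submodule.map_orthogonal_equiv K (f.linearIsometryEquivOfIsometry hf)).trans
    (congrArg _ hKeq)).le

theorem Submodule.eq_of_add_eq_add_of_mem_orthogonal {K : Submodule ℝ E} {x x' y y' : E}
    (hx : x ∈ K) (hx' : x' ∈ K) (hy : y ∈ Kᗮ) (hy' : y' ∈ Kᗮ) (h : x + y = x' + y') :
    x = x' := by
  have hmem : x - x' ∈ K ⊓ Kᗮ := by
    refine ⟨K.sub_mem hx hx', ?_⟩
    rw [show x - x' = y' - y by rw [sub_eq_sub_iff_add_eq_add, h, add_comm]]
    exact Kᗮ.sub_mem hy' hy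
  rwa [K.inf_orthogonal_eq_bot, Submodule.mem_bot, sub_eq_zero] at hmem

theorem AffineEquiv.apply_eq_add_linear_of_apply_add_eq {K : Submodule ℝ E} {ν f : E ≃ᵃ[ℝ] E}
    {c d v u : E} (hν0 : ν 0 ∈ K) (hνK : K.map (ν.linear : E →ₗ[ℝ] E) ≤ K)
    (hνfix : ∀ x ∈ Kᗮ, ν.linear x = x) (hfK : K.map (f.linear : E →ₗ[ℝ] E) ≤ K)
    (hfKperp : Kᗮ.map (f.linear : E →ₗ[ℝ] E) ≤ Kᗮ) (hc : c ∈ K) (hd : d ∈ Kᗮ)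
    (hcd : f 0 = c + d) (hv : v ∈ K) (hu : u ∈ Kᗮ) (h : f (v + u) = ν (v + u)) :
    ν v = c + f.linear v := by
  refine Submodule.eq_of_add_eq_add_of_mem_orthogonal (y := u) (y' := d + f.linear u) ?_
    (K.add_mem hc (hfK (Submodule.mem_map_of_mem hv))) hu
    (Kᗮ.add_mem hd (hfKperp (Submodule.mem_map_of_mem hu))) ?_
  · rw [ν.apply_eq_linear_add_s7]
    exact K.add_mem (hνK (Submodule.mem_map_of_mem hv)) hν0
  · calc ν v + u = ν (v + u) := by
          rw [ν.apply_eq_linear_add_s7 (v + u), map_add, hνfix u hu, ν.apply_eq_linear_add_s7 v]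
          abel
      _ = f (v + u) := h.symm
      _ = c + f.linear v + (d + f.linear u) := by
          rw [f.apply_eq_linear_add_s7, map_add, hcd]
          abel

end

theorem map_linear_spanOf_le {n : ℕ} {N : Subgroup (AffG n)} {γ : AffG n}
    (hγ : γ ∈ normalizer (N : Set (AffG n))) :
    (spanOf N).map (γ.linear : Euc n →ₗ[ℝ] Euc n) ≤ spanOf N := by
  rw [spanOf, Submodule.map_span, Submodule.span_le]
  rintro _ ⟨a, ha, rfl⟩
  refine Submodule.subset_span ?_
  change transl (γ.linear a) ∈ N
  rw [transl, ← AffineEquiv.conj_constVAdd]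
  exact (mem_normalizer_iff.mp hγ _).mp ha

/-- Lemma 4: if the extension `1 → N → Γ → Γ/N → 1` splits and the coset `N(b+B)` has
finite order in `Γ/N`, then the induced element of the structure group fixes a point of
`V/N`. -/
theorem stmt7 {n : ℕ} (Γ N : Subgroup (AffG n)) (hΓ : IsSpaceGroup Γ)
    (hN : IsCompleteNormal N Γ)
    (hsplit : ∃ Sg : Subgroup (AffG n), Sg ≤ Γ ∧ N ⊔ Sg = Γ ∧ N ⊓ Sg = ⊥)
    (f : AffG n) (hf : f ∈ Γ) (hfin : ∃ m : ℕ, 0 < m ∧ f ^ m ∈ N)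
    (c d : Euc n) (hc : c ∈ spanOf N) (hd : d ∈ (spanOf N)ᗮ) (hcd : f 0 = c + d) :
    ∃ v ∈ spanOf N, ∃ ν ∈ N, ν v = c + f.linear v := by
  obtain ⟨hiso, -, -⟩ := hΓ
  obtain ⟨hNΓ, hnorm, hcomplete⟩ := hN
  obtain ⟨Sg, hSΓ, hsup, hinf⟩ := hsplit
  obtain ⟨m, hm, hfm⟩ := hfin
  have hΓN : Γ ≤ normalizer (N : Set (AffG n)) := le_normalizer_iff.mpr hnorm
  obtain ⟨ν, hν, σ, hσ, rfl⟩ : f ∈ (N : Set (AffG n)) * (Sg : Set (AffG n)) := by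
    rwa [← coe_mul_of_right_le_normalizer_left N Sg (hSΓ.trans hΓN), hsup]
  have hσm : σ ^ m = 1 := by
    have hσN : σ ^ m ∈ N := by
      simpa using N.mul_mem (N.inv_mem (mul_pow_mul_inv_pow_mem hν (hΓN (hSΓ hσ)) m)) hfm
    have hσNS : σ ^ m ∈ N ⊓ Sg := ⟨hσN, Sg.pow_mem hσ m⟩
    rwa [hinf, mem_bot] at hσNS
  obtain ⟨w, hw⟩ := AffineEquiv.exists_apply_eq_self_of_isOfFinOrder
    (isOfFinOrder_iff_pow_eq_one.mpr ⟨m, hm, hσm⟩)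
  obtain ⟨v, hv, u, hu, rfl⟩ := (spanOf N).exists_add_mem_mem_orthogonal w
  obtain ⟨-, hν0, hνfix⟩ := (hcomplete ν).mp hν
  have hfV := map_linear_spanOf_le (hΓN hf)
  refine ⟨v, hv, ν, hν, AffineEquiv.apply_eq_add_linear_of_apply_add_eq hν0
    (map_linear_spanOf_le (hΓN (hNΓ hν))) hνfix hfV (AffineEquiv.map_linear_orthogonal_le
    (hiso _ hf) hfV) hc hd hcd hv hu ?_⟩
  rw [AffineEquiv.coe_mul, Function.comp_apply, hw]
end

section
/- Let Γ be an n-space group. An affinity α = a+A of E^n (with a ∈ E^n and A ∈ GL(n,ℝ)) satisfies αγα⁻¹ = γ for every γ ∈ Γ if and only if A = I and a ∈ Span(Z(Γ)). In particular, the centralizer of Γ in the group of affinities of E^n equals the centralizer of Γ in Isom(E^n), and both equal the group of translations {v + I : v ∈ Span(Z(Γ))}. -/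
/-!
If `α = a + A` commutes with `Γ`, the displacement `x ↦ dist (α x) x` is `Γ`-invariant, hence
bounded by cocompactness, and a bounded displacement forces `A = I`. Then `a` is fixed by every
linear part of `Γ`. Were its component `w` orthogonal to `Span Z(Γ)` nonzero, pick `φ k ∈ Γ`
with `φ k 0` near `k (2R + 1) w / ‖w‖`, `R` a covering radius. Conjugation by `φ k` sends the
finite generating set `{γ ∈ Γ | ‖γ 0‖ ≤ 2R + 1}` into a fixed finite set, so for some `k < l` it
acts identically on the generators, and `φ l (φ k)⁻¹` is central with positive drift along `w`.
Being central it is a translation, so its vector lies in `Span Z(Γ) ⊥ w`: a contradiction.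
-/

open RealInnerProductSpace

namespace AffineEquiv

section Module

variable {k V : Type*} [Ring k] [AddCommGroup V] [Module k V]

theorem apply_add_eq_linear_add (f : V ≃ᵃ[k] V) (v x : V) : f (v + x) = f.linear v + f x :=
  f.map_vadd x v

theorem apply_eq_linear_add_apply_zero (f : V ≃ᵃ[k] V) (v : V) : f v = f.linear v + f 0 := by
  simpa using f.apply_add_eq_linear_add v 0

end Module

section Normed

variable {k E : Type*} [Ring k] [NormedAddCommGroup E] [Module k E]

theorem norm_linear_apply_s9 {f : E ≃ᵃ[k] E} (hf : Isometry f) (v : E) : ‖f.linear v‖ = ‖v‖ := by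
  rw [← dist_zero_right v, ← hf.dist_eq v 0, dist_eq_norm, f.apply_eq_linear_add_apply_zero v,
    add_sub_cancel_right]

theorem norm_inv_apply {f : E ≃ᵃ[k] E} (hf : Isometry ⇑f⁻¹) (x : E) : ‖f⁻¹ x‖ = dist x (f 0) := by
  rw [← dist_zero_right, ← hf.dist_eq x (f 0), inv_def, symm_apply_apply]

theorem norm_inv_mul_mul_apply_zero_le {f g : E ≃ᵃ[k] E} (hf : Isometry f) (hg : Isometry ⇑g⁻¹)
    {t : E} (ht : f.linear t = t) : ‖(g⁻¹ * f * g) 0‖ ≤ ‖f 0‖ + 2 * ‖g 0 - t‖ := by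
  change ‖g⁻¹ (f (g 0))‖ ≤ _
  have hsplit : f (g 0) - g 0 = f.linear (g 0 - t) + f 0 - (g 0 - t) := by
    rw [f.apply_eq_linear_add_apply_zero (g 0), map_sub, ht]; abel
  calc ‖g⁻¹ (f (g 0))‖ = ‖f (g 0) - g 0‖ := by rw [norm_inv_apply hg, dist_eq_norm]
    _ ≤ ‖f.linear (g 0 - t)‖ + ‖f 0‖ + ‖g 0 - t‖ := by
        rw [hsplit]; exact (norm_sub_le _ _).trans (by gcongr; exact norm_add_le _ _)
    _ = ‖f 0‖ + 2 * ‖g 0 - t‖ := by rw [norm_linear_apply_s9 hf]; ring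

end Normed

theorem inner_apply_of_linear_apply_eq {E : Type*} [NormedAddCommGroup E] [InnerProductSpace ℝ E]
    {f : E ≃ᵃ[ℝ] E} (hf : Isometry f) {u : E} (hu : f.linear u = u) (x : E) :
    ⟪f x, u⟫ = ⟪x, u⟫ + ⟪f 0, u⟫ := by
  let L : E →ₗᵢ[ℝ] E := ⟨f.linear.toLinearMap, norm_linear_apply_s9 hf⟩
  rw [f.apply_eq_linear_add_apply_zero x, inner_add_left]
  congr 1
  conv_lhs => rw [← hu]
  exact L.inner_map_map x u

end AffineEquiv

theorem LinearMap.apply_eq_self_of_norm_add_apply_sub_le {E : Type*} [NormedAddCommGroup E]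
    [NormedSpace ℝ E] (A : E →ₗ[ℝ] E) (a : E) {M : ℝ} (h : ∀ x, ‖a + A x - x‖ ≤ M) (v : E) :
    A v = v := by
  by_contra hv
  have hd : 0 < ‖A v - v‖ := norm_pos_iff.2 (sub_ne_zero.2 hv)
  set t := (M + ‖a‖ + 1) / ‖A v - v‖
  have ht : 0 ≤ t := by
    have := (norm_nonneg _).trans (h 0)
    positivity
  have hdisp : a + A (t • v) - t • v = a + t • (A v - v) := by
    rw [map_smul, smul_sub]; abel
  have hnorm : ‖t • (A v - v)‖ = M + ‖a‖ + 1 := by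
    rw [norm_smul, Real.norm_of_nonneg ht, div_mul_cancel₀ _ hd.ne']
  have htri := norm_sub_le (a + t • (A v - v)) a
  rw [add_sub_cancel_left] at htri
  have := h (t • v)
  rw [hdisp] at this
  linarith

theorem exists_forall_dist_le_of_commute {X F : Type*} [PseudoMetricSpace X] [FunLike F X X]
    {Γ : Set F} (hiso : ∀ γ ∈ Γ, Isometry γ) {K : Set X} (hK : IsCompact K)
    (hcov : ∀ x, ∃ γ ∈ Γ, γ x ∈ K) {φ : X → X} (hφ : Continuous φ)
    (hcomm : ∀ γ ∈ Γ, ∀ x, φ (γ x) = γ (φ x)) : ∃ M, ∀ x, dist (φ x) x ≤ M := by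
  obtain ⟨M, hM⟩ := hK.bddAbove_image (f := fun x => dist (φ x) x)
    (hφ.dist continuous_id).continuousOn
  refine ⟨M, fun x => ?_⟩
  obtain ⟨γ, hγ, hγx⟩ := hcov x
  calc dist (φ x) x = dist (φ (γ x)) (γ x) := by rw [hcomm γ hγ, (hiso γ hγ).dist_eq]
    _ ≤ M := hM ⟨γ x, hγx, rfl⟩

theorem Subgroup.le_closure_of_norm_apply_zero_sub_le {E : Type*} [NormedAddCommGroup E]
    [NormedSpace ℝ E] {Γ : Subgroup (E ≃ᵃ[ℝ] E)} (hiso : ∀ γ ∈ Γ, Isometry γ) {R : ℝ}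
    (hR : 0 ≤ R) (hdense : ∀ x, ∃ γ ∈ Γ, ‖γ 0 - x‖ ≤ R) :
    Γ ≤ Subgroup.closure {γ | γ ∈ Γ ∧ ‖γ 0‖ ≤ 2 * R + 1} := by
  set H := Subgroup.closure {γ | γ ∈ Γ ∧ ‖γ 0‖ ≤ 2 * R + 1}
  suffices ∀ k : ℕ, ∀ γ ∈ Γ, ‖γ 0‖ ≤ k → γ ∈ H from
    fun γ hγ => this _ γ hγ (Nat.le_ceil _)
  intro k
  induction k with
  | zero =>
    intro γ hγ h0
    exact Subgroup.subset_closure ⟨hγ, by push_cast at h0; linarith⟩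
  | succ k ih =>
    intro γ hγ hk
    by_cases hsmall : ‖γ 0‖ ≤ 2 * R + 1
    · exact Subgroup.subset_closure ⟨hγ, hsmall⟩
    -- `p` lies at distance `R + 1` from `γ 0` towards `0`, so that `‖δ 0‖ ≤ ‖γ 0‖ - 1`
    set c := γ 0
    have hc : 0 < ‖c‖ := by linarith
    set p := (1 - (R + 1) / ‖c‖) • c
    have hp : ‖p‖ = ‖c‖ - (R + 1) := by
      rw [norm_smul, Real.norm_of_nonneg, sub_mul, div_mul_cancel₀ _ hc.ne', one_mul]
      rw [sub_nonneg, div_le_one hc]; linarith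
    have hcp : ‖c - p‖ = R + 1 := by
      rw [show c - p = ((R + 1) / ‖c‖) • c by simp only [p, sub_smul, one_smul, sub_sub_cancel],
        norm_smul, Real.norm_of_nonneg (by positivity),
        div_mul_cancel₀ _ hc.ne']
    obtain ⟨δ, hδ, hδp⟩ := hdense p
    have hδH : δ ∈ H := by
      refine ih δ hδ ?_
      have := norm_le_norm_add_norm_sub' (δ 0) p
      push_cast at hk
      linarith
    have hstep : δ⁻¹ * γ ∈ H := by
      refine Subgroup.subset_closure ⟨mul_mem (inv_mem hδ) hγ, ?_⟩
      rw [AffineEquiv.coe_mul, Function.comp_apply,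
        AffineEquiv.norm_inv_apply (hiso _ (inv_mem hδ)), dist_eq_norm]
      have := norm_sub_le_norm_sub_add_norm_sub c p (δ 0)
      rw [norm_sub_rev p] at this
      linarith
    simpa using mul_mem hδH hstep

theorem linear_apply_eq_of_mem_spanOf {n : ℕ} {H : Subgroup (AffG n)} {γ : AffG n}
    (hγ : ∀ f ∈ H, f * γ = γ * f) {v : Euc n} (hv : v ∈ spanOf H) : γ.linear v = v := by
  refine Submodule.span_le (p := LinearMap.eqLocus γ.linear.toLinearMap LinearMap.id)
    |>.2 (fun b hb => ?_) hv
  have : b + γ 0 = γ (b + 0) := DFunLike.congr_fun (hγ _ hb) 0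
  rw [γ.apply_add_eq_linear_add, add_left_inj] at this
  exact this.symm

namespace IsSpaceGroup

variable {n : ℕ} {Γ : Subgroup (AffG n)}

theorem linear_eq_refl_of_commute (hΓ : IsSpaceGroup Γ) {a : Euc n} {A : Euc n ≃ₗ[ℝ] Euc n}
    (hcomm : ∀ γ ∈ Γ, ∀ x : Euc n, a + A (γ x) = γ (a + A x)) :
    A = LinearEquiv.refl ℝ (Euc n) := by
  obtain ⟨K, hK, hcov⟩ := hΓ.2.2
  obtain ⟨M, hM⟩ := exists_forall_dist_le_of_commute (Γ := (Γ : Set (AffG n))) hΓ.1 hK hcov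
    (continuous_const.add A.toLinearMap.continuous_of_finiteDimensional) hcomm
  exact LinearEquiv.ext <| A.toLinearMap.apply_eq_self_of_norm_add_apply_sub_le a
    fun x => by simpa [dist_eq_norm] using hM x

theorem eq_transl_of_commute (hΓ : IsSpaceGroup Γ) {g : AffG n}
    (hg : ∀ γ ∈ Γ, g * γ = γ * g) : g = transl (g 0) := by
  have hlin : g.linear = LinearEquiv.refl ℝ (Euc n) := by
    refine hΓ.linear_eq_refl_of_commute (a := g 0) fun γ hγ x => ?_
    have : g (γ x) = γ (g x) := DFunLike.congr_fun (hg γ hγ) x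
    rwa [g.apply_eq_linear_add_apply_zero, g.apply_eq_linear_add_apply_zero x, add_comm,
      add_comm (g.linear x)] at this
  ext x
  rw [g.apply_eq_linear_add_apply_zero, hlin, add_comm]
  rfl

theorem finite_setOf_norm_apply_zero_le (hΓ : IsSpaceGroup Γ) (B : ℝ) :
    {γ | γ ∈ Γ ∧ ‖γ 0‖ ≤ B}.Finite := by
  refine (hΓ.2.1 (Metric.closedBall 0 |B|) (isCompact_closedBall _ _)).subset ?_
  rintro γ ⟨hγ, hB⟩
  exact ⟨hγ, γ 0, ⟨0, by simp, rfl⟩, by simpa using hB.trans (le_abs_self B)⟩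

theorem exists_norm_apply_zero_sub_le (hΓ : IsSpaceGroup Γ) :
    ∃ R, 0 ≤ R ∧ ∀ x, ∃ γ ∈ Γ, ‖γ 0 - x‖ ≤ R := by
  obtain ⟨K, hK, hcov⟩ := hΓ.2.2
  obtain ⟨R, hR⟩ := hK.isBounded.subset_closedBall 0
  refine ⟨max R 0, le_max_right _ _, fun x => ?_⟩
  obtain ⟨γ, hγ, hγx⟩ := hcov x
  refine ⟨γ⁻¹, inv_mem hγ, ?_⟩
  have hiso := hΓ.1 _ (inv_mem hγ)
  calc ‖γ⁻¹ 0 - x‖ = dist (γ⁻¹ 0) (γ⁻¹ (γ x)) := by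
        rw [dist_eq_norm, AffineEquiv.inv_def, AffineEquiv.symm_apply_apply]
    _ = ‖γ x‖ := by rw [hiso.dist_eq, dist_comm, dist_zero_right]
    _ ≤ max R 0 := by simpa using (hR hγx).trans (le_max_left R 0)

theorem exists_commute_inner_apply_zero_pos (hΓ : IsSpaceGroup Γ) {u : Euc n} (hu : ‖u‖ = 1)
    (hfix : ∀ γ ∈ Γ, γ.linear u = u) :
    ∃ g ∈ Γ, (∀ γ ∈ Γ, g * γ = γ * g) ∧ 0 < ⟪g 0, u⟫ := by
  obtain ⟨R, hR, hdense⟩ := hΓ.exists_norm_apply_zero_sub_le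
  set S := {γ | γ ∈ Γ ∧ ‖γ 0‖ ≤ 2 * R + 1}
  set F := {γ | γ ∈ Γ ∧ ‖γ 0‖ ≤ 4 * R + 1}
  have : Finite S := (hΓ.finite_setOf_norm_apply_zero_le _).to_subtype
  choose φ hφΓ hφ using fun k : ℕ => hdense ((k * (2 * R + 1)) • u)
  have hconj (k : ℕ) (h : S) : (φ k)⁻¹ * h * φ k ∈ F := by
    obtain ⟨h, hhΓ, hh0⟩ := h
    refine ⟨mul_mem (mul_mem (inv_mem (hφΓ k)) hhΓ) (hφΓ k), ?_⟩
    have := AffineEquiv.norm_inv_mul_mul_apply_zero_le (hΓ.1 h hhΓ) (hΓ.1 _ (inv_mem (hφΓ k)))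
      (t := (k * (2 * R + 1)) • u) (by rw [map_smul, hfix h hhΓ])
    linarith [hφ k]
  -- pigeonhole: two orbit points far apart along `u` conjugate the generators in the same way
  obtain ⟨k, l, hkl, hkl_conj⟩ := (Set.Finite.pi fun _ : S =>
    hΓ.finite_setOf_norm_apply_zero_le (4 * R + 1)).exists_lt_map_eq_of_forall_mem
      (f := fun k (h : S) => (φ k)⁻¹ * h * φ k) fun k => Set.mem_univ_pi.2 (hconj k)
  set g := φ l * (φ k)⁻¹
  have hgΓ : g ∈ Γ := mul_mem (hφΓ l) (inv_mem (hφΓ k))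
  refine ⟨g, hgΓ, fun γ hγ => ?_, ?_⟩
  · have hgS : g ∈ Subgroup.centralizer S := Subgroup.mem_centralizer_iff.2 fun h hh => by
      have := congrArg (fun x => φ l * x * (φ k)⁻¹) (congrFun hkl_conj ⟨h, hh⟩).symm
      simpa only [g, mul_assoc, mul_inv_cancel_left, mul_inv_cancel, mul_one] using this
    rw [← Subgroup.centralizer_closure] at hgS
    exact (Subgroup.mem_centralizer_iff.1 hgS γ
      (Subgroup.le_closure_of_norm_apply_zero_sub_le hΓ.1 hR hdense hγ)).symm
  · have hinner (j : ℕ) : |⟪φ j 0, u⟫ - j * (2 * R + 1)| ≤ R := by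
      have := abs_real_inner_le_norm (φ j 0 - (j * (2 * R + 1)) • u) u
      rw [inner_sub_left, real_inner_smul_left, real_inner_self_eq_norm_sq, hu, one_pow, mul_one,
        mul_one] at this
      exact this.trans (hφ j)
    have hgk : ⟪φ l 0, u⟫ = ⟪φ k 0, u⟫ + ⟪g 0, u⟫ := by
      rw [← AffineEquiv.inner_apply_of_linear_apply_eq (hΓ.1 g hgΓ) (hfix g hgΓ)]
      simp [g, AffineEquiv.coe_mul, AffineEquiv.inv_def]
    have hkl' : (k : ℝ) + 1 ≤ l := by exact_mod_cast hkl
    have := hinner k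
    have := hinner l
    rw [abs_le] at *
    nlinarith

theorem mem_spanOf_of_forall_linear_apply_eq (hΓ : IsSpaceGroup Γ) {Z : Subgroup (AffG n)}
    (hZ : ∀ f : AffG n, f ∈ Z ↔ f ∈ Γ ∧ ∀ γ ∈ Γ, f * γ = γ * f) {a : Euc n}
    (ha : ∀ γ ∈ Γ, γ.linear a = a) : a ∈ spanOf Z := by
  by_contra haZ
  set V := spanOf Z
  set w := a - V.starProjection a
  have hwV : w ∈ Vᗮ := V.sub_starProjection_mem_orthogonal a
  have hw : w ≠ 0 := fun h => haZ (sub_eq_zero.1 h ▸ V.starProjection_apply_mem a)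
  have hwfix (γ : AffG n) (hγ : γ ∈ Γ) : γ.linear (‖w‖⁻¹ • w) = ‖w‖⁻¹ • w := by
    rw [map_smul, map_sub, ha γ hγ, linear_apply_eq_of_mem_spanOf
      (fun f hf => ((hZ f).1 hf).2 γ hγ) (V.starProjection_apply_mem a)]
  obtain ⟨g, hgΓ, hgc, hgw⟩ :=
    hΓ.exists_commute_inner_apply_zero_pos (norm_smul_inv_norm hw) hwfix
  have hgZ : transl (g 0) ∈ Z := hΓ.eq_transl_of_commute hgc ▸ (hZ g).2 ⟨hgΓ, hgc⟩
  rw [real_inner_smul_right, V.inner_right_of_mem_orthogonal (Submodule.subset_span hgZ) hwV,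
    mul_zero] at hgw
  exact hgw.false

end IsSpaceGroup

/-- Lemma 10/12: an affinity `α = a + A` of `Eⁿ` centralizes `Γ` iff `A = I` and
`a ∈ Span Z(Γ)`; in particular the centralizer of `Γ` in `Aff(Eⁿ)` equals its centralizer
in `Isom(Eⁿ)` and consists of the translations by vectors of `Span Z(Γ)`. -/
theorem stmt9 {n : ℕ} (Γ Z : Subgroup (AffG n)) (hΓ : IsSpaceGroup Γ)
    (hZ : ∀ f : AffG n, f ∈ Z ↔ f ∈ Γ ∧ ∀ γ ∈ Γ, f * γ = γ * f)
    (a : Euc n) (A : Euc n ≃ₗ[ℝ] Euc n) :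
    (∀ γ ∈ Γ, ∀ x : Euc n, a + A (γ x) = γ (a + A x)) ↔
      A = LinearEquiv.refl ℝ (Euc n) ∧ a ∈ spanOf Z := by
  constructor
  · intro hcomm
    obtain rfl := hΓ.linear_eq_refl_of_commute hcomm
    refine ⟨rfl, hΓ.mem_spanOf_of_forall_linear_apply_eq hZ fun γ hγ => ?_⟩
    have := hcomm γ hγ 0
    rwa [LinearEquiv.refl_apply, LinearEquiv.refl_apply, add_zero,
      γ.apply_eq_linear_add_apply_zero a, add_left_inj, eq_comm] at this
  · rintro ⟨rfl, ha⟩ γ hγ x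
    rw [LinearEquiv.refl_apply, LinearEquiv.refl_apply, γ.apply_add_eq_linear_add,
      linear_apply_eq_of_mem_spanOf (fun f hf => ((hZ f).1 hf).2 γ hγ) ha]
end

section
/- Let Γ be an n-space group, and let Aut_E(Γ) be the group of automorphisms of Γ of the form γ ↦ ηγη⁻¹ for some isometry η of E^n (necessarily η normalizes Γ). Then the group Inn(Γ) of inner automorphisms of Γ is contained in Aut_E(Γ), and the quotient group Out_E(Γ) = Aut_E(Γ)/Inn(Γ) is finite; equivalently, Inn(Γ) has finite index in Aut_E(Γ). -/
/-! Auxiliary material for the proof of `stmt10`. -/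

noncomputable section Aux

variable {n : ℕ}

noncomputable def lin (f : AffG n) : Euc n →L[ℝ] Euc n :=
  LinearMap.toContinuousLinearMap (f : Euc n →ᵃ[ℝ] Euc n).linear

lemma lin_sub (f : AffG n) (x y : Euc n) : f x - f y = lin f (x - y) := by
  have := AffineMap.linearMap_vsub (f : Euc n →ᵃ[ℝ] Euc n) x y
  simp [lin, vsub_eq_sub] at this ⊢
  exact this.symm

lemma lin_apply (f : AffG n) (x : Euc n) : lin f x = f x - f 0 := by
  rw [lin_sub f x 0, sub_zero]

lemma apply_eq (f : AffG n) (x : Euc n) : f x = f 0 + lin f x := by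
  rw [lin_apply]; abel

lemma eq_of_parts (f g : AffG n) (h0 : f 0 = g 0) (hl : lin f = lin g) : f = g := by
  apply AffineEquiv.ext
  intro x
  have hf := apply_eq f x
  have hg := apply_eq g x
  rw [hf, hg, h0, hl]

lemma mul_apply' (f g : AffG n) (x : Euc n) : (f * g) x = f (g x) := rfl

lemma lin_mul (f g : AffG n) (x : Euc n) : lin (f * g) x = lin f (lin g x) :=
  calc lin (f * g) x = (f * g) x - (f * g) 0 := lin_apply _ _
  _ = f (g x) - f (g 0) := rfl
  _ = lin f (g x - g 0) := lin_sub f _ _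
  _ = lin f (lin g x) := by rw [← lin_apply g x]

lemma lin_one (x : Euc n) : lin (1 : AffG n) x = x := by
  rw [lin_apply]; simp

lemma lin_inv_right (f : AffG n) (x : Euc n) : lin f (lin f⁻¹ x) = x := by
  rw [← lin_mul, mul_inv_cancel, lin_one]

lemma aff_isometry_inv (f : AffG n) (hf : Isometry (⇑f)) : Isometry (⇑f⁻¹) := by
  apply Isometry.of_dist_eq
  intro x y
  have := hf.dist_eq (f⁻¹ x) (f⁻¹ y)
  rw [show f (f⁻¹ x) = x from f.apply_symm_apply x,
    show f (f⁻¹ y) = y from f.apply_symm_apply y] at this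
  exact this.symm

lemma isometry_mul (f g : AffG n) (hf : Isometry (⇑f)) (hg : Isometry (⇑g)) :
    Isometry (⇑(f * g)) := hf.comp hg

lemma norm_lin (f : AffG n) (hf : Isometry (⇑f)) (x : Euc n) : ‖lin f x‖ = ‖x‖ := by
  rw [lin_apply, ← dist_eq_norm, hf.dist_eq, dist_eq_norm, sub_zero]

lemma norm_lin_le_one (f : AffG n) (hf : Isometry (⇑f)) : ‖lin f‖ ≤ 1 := by
  apply ContinuousLinearMap.opNorm_le_bound _ zero_le_one
  intro x
  rw [norm_lin f hf, one_mul]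

lemma norm_inv_zero (f : AffG n) (hf : Isometry (⇑f)) : ‖f⁻¹ 0‖ = ‖f 0‖ := by
  have := hf.dist_eq (f⁻¹ 0) 0
  rw [show f (f⁻¹ 0) = 0 from f.apply_symm_apply 0] at this
  rw [← dist_zero_right, ← this, dist_comm, dist_zero_right]

lemma conj_lin_est (ν γ : AffG n) (hν : Isometry (⇑ν)) (hγ : Isometry (⇑γ)) :
    ‖lin (ν * γ * ν⁻¹) - lin γ‖ ≤ 2 * ‖lin ν - 1‖ := by
  apply ContinuousLinearMap.opNorm_le_bound _ (by positivity)
  intro x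
  have hνi := aff_isometry_inv ν hν
  set y := lin ν⁻¹ x with hy
  have hyx : ‖y‖ = ‖x‖ := norm_lin ν⁻¹ hνi x
  have e1 : lin (ν * γ * ν⁻¹) x = lin ν (lin γ y) := by
    rw [lin_mul, lin_mul]
  have e2 : lin γ x = lin γ (lin ν y) := by rw [hy, lin_inv_right]
  calc ‖(lin (ν * γ * ν⁻¹) - lin γ) x‖
      = ‖lin ν (lin γ y) - lin γ (lin ν y)‖ := by
        rw [ContinuousLinearMap.sub_apply, e1, e2]
    _ ≤ ‖lin ν (lin γ y) - lin γ y‖ + ‖lin γ y - lin γ (lin ν y)‖ := by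
        have := norm_sub_le (lin ν (lin γ y) - lin γ y) (lin γ y - lin γ (lin ν y))
        simpa using norm_sub_le_norm_sub_add_norm_sub (lin ν (lin γ y)) (lin γ y) (lin γ (lin ν y))
    _ = ‖(lin ν - 1) (lin γ y)‖ + ‖lin γ (y - lin ν y)‖ := by
        rw [map_sub]
        simp [ContinuousLinearMap.sub_apply]
    _ ≤ ‖lin ν - 1‖ * ‖lin γ y‖ + ‖y - lin ν y‖ := by
        gcongr
        · exact (lin ν - 1).le_opNorm _
        · rw [norm_lin γ hγ]
    _ ≤ ‖lin ν - 1‖ * ‖x‖ + ‖lin ν - 1‖ * ‖x‖ := by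
        gcongr
        · rw [norm_lin γ hγ, hyx]
        · have : y - lin ν y = (1 - lin ν) y := by
            simp [ContinuousLinearMap.sub_apply]
          rw [this]
          calc ‖(1 - lin ν) y‖ ≤ ‖(1 : Euc n →L[ℝ] Euc n) - lin ν‖ * ‖y‖ :=
                (1 - lin ν).le_opNorm y
          _ = ‖lin ν - 1‖ * ‖x‖ := by rw [norm_sub_rev, hyx]
    _ = 2 * ‖lin ν - 1‖ * ‖x‖ := by ring

lemma conj_trans_est (ν γ : AffG n) (hν : Isometry (⇑ν)) (hγ : Isometry (⇑γ)) :
    ‖(ν * γ * ν⁻¹) 0 - γ 0‖ ≤ 2 * ‖ν 0‖ + ‖lin ν - 1‖ * ‖γ 0‖ := by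
  have key : (ν * γ * ν⁻¹) 0 - γ 0
      = ν 0 + ((lin ν - 1) (γ 0)) + lin ν (lin γ (ν⁻¹ 0)) := by
    have happ : (ν * γ * ν⁻¹) 0 = ν (γ (ν⁻¹ 0)) := rfl
    rw [happ, apply_eq ν (γ (ν⁻¹ 0)), apply_eq γ (ν⁻¹ 0), map_add]
    simp only [ContinuousLinearMap.sub_apply, ContinuousLinearMap.one_apply]
    abel
  rw [key]
  have h3 : ‖lin ν (lin γ (ν⁻¹ 0))‖ = ‖ν 0‖ := by
    rw [norm_lin ν hν, norm_lin γ hγ, norm_inv_zero ν hν]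
  calc ‖ν 0 + ((lin ν - 1) (γ 0)) + lin ν (lin γ (ν⁻¹ 0))‖
      ≤ ‖ν 0 + ((lin ν - 1) (γ 0))‖ + ‖lin ν (lin γ (ν⁻¹ 0))‖ := norm_add_le _ _
    _ ≤ ‖ν 0‖ + ‖(lin ν - 1) (γ 0)‖ + ‖ν 0‖ := by
        rw [h3]; gcongr; exact norm_add_le _ _
    _ ≤ ‖ν 0‖ + ‖lin ν - 1‖ * ‖γ 0‖ + ‖ν 0‖ := by
        gcongr; exact (lin ν - 1).le_opNorm _
    _ = 2 * ‖ν 0‖ + ‖lin ν - 1‖ * ‖γ 0‖ := by ring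

noncomputable def dd (f g : AffG n) : ℝ := ‖f 0 - g 0‖ + ‖lin f - lin g‖

lemma dd_pos (f g : AffG n) (h : f ≠ g) : 0 < dd f g := by
  have hnn : 0 ≤ dd f g := by unfold dd; positivity
  rcases hnn.lt_or_eq with h' | h'
  · exact h'
  · exfalso
    apply h
    unfold dd at h'
    have h1 : ‖f 0 - g 0‖ = 0 := by
      nlinarith [norm_nonneg (f 0 - g 0), norm_nonneg (lin f - lin g)]
    have h2 : ‖lin f - lin g‖ = 0 := by
      nlinarith [norm_nonneg (f 0 - g 0), norm_nonneg (lin f - lin g)]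
    exact eq_of_parts f g (by simpa [sub_eq_zero] using norm_eq_zero.mp h1)
      (by simpa [sub_eq_zero] using norm_eq_zero.mp h2)


lemma sep_finite {E : Type*} [PseudoMetricSpace E] [ProperSpace E] (s : Set E) (x0 : E)
    (r ε : ℝ) (hs : s ⊆ Metric.closedBall x0 r) (hε : 0 < ε)
    (hsep : ∀ x ∈ s, ∀ y ∈ s, x ≠ y → ε ≤ dist x y) : s.Finite := by
  have htb : TotallyBounded s :=
    (isCompact_closedBall x0 r).totallyBounded.subset hs
  rw [Metric.totallyBounded_iff] at htb
  obtain ⟨t, htf, hcov⟩ := htb (ε / 2) (by linarith)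
  have hsub : s ⊆ ⋃ y ∈ t, s ∩ Metric.ball y (ε / 2) := by
    intro x hx
    obtain ⟨y, hy, hxy⟩ := Set.mem_iUnion₂.mp (hcov hx)
    exact Set.mem_iUnion₂.mpr ⟨y, hy, hx, hxy⟩
  refine Set.Finite.subset (Set.Finite.biUnion htf fun y _ => ?_) hsub
  apply Set.Subsingleton.finite
  intro a ha b hb
  by_contra hne
  have h1 := hsep a ha.1 b hb.1 hne
  have h2 : dist a b < ε := by
    have := dist_triangle a y b
    have ha' := Metric.mem_ball.mp ha.2
    have hb' := Metric.mem_ball.mp hb.2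
    rw [dist_comm y b] at this
    linarith
  linarith

lemma discreteness {Γ : Subgroup (AffG n)} (hΓ : IsSpaceGroup Γ) (r : ℝ) (hr : 0 ≤ r) :
    ∃ ε > 0, ε ≤ 1 ∧ ∀ γ ∈ Γ, ‖γ 0‖ ≤ r → ∀ δ ∈ Γ, ‖δ 0 - γ 0‖ < 1 → dd δ γ < ε → δ = γ := by
  have hF : {γ : AffG n | γ ∈ Γ ∧ ((⇑γ '' Metric.closedBall 0 (r+1)) ∩ Metric.closedBall 0 (r+1)).Nonempty}.Finite :=
    hΓ.2.1 _ (isCompact_closedBall 0 (r+1))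
  set F := {γ : AffG n | γ ∈ Γ ∧ ((⇑γ '' Metric.closedBall 0 (r+1)) ∩ Metric.closedBall 0 (r+1)).Nonempty} with hFdef
  have hmemF : ∀ δ ∈ Γ, ‖δ 0‖ ≤ r + 1 → δ ∈ F := by
    intro δ hδ h
    refine ⟨hδ, δ 0, ⟨0, ?_, rfl⟩, ?_⟩
    · simpa using by linarith
    · simpa [Metric.mem_closedBall, dist_zero_right] using h
  classical
  set T : Finset ℝ :=
    ((hF.toFinset ×ˢ hF.toFinset).filter fun p => p.1 ≠ p.2).image fun p => dd p.1 p.2 with hT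
  have hTpos : ∀ x ∈ T, 0 < x := by
    intro x hx
    rw [hT] at hx
    simp only [Finset.mem_image, Finset.mem_filter] at hx
    obtain ⟨p, ⟨_, hne⟩, rfl⟩ := hx
    exact dd_pos _ _ hne
  by_cases hTne : T.Nonempty
  · refine ⟨min 1 (T.min' hTne), lt_min one_pos (hTpos _ (T.min'_mem hTne)), min_le_left _ _, ?_⟩
    intro γ hγ hγr δ hδ hclose hdd
    by_contra hne
    have hδF : δ ∈ F := hmemF δ hδ (by
      have h2 := norm_sub_norm_le (δ 0) (γ 0)
      linarith)
    have hγF : γ ∈ F := hmemF γ hγ (by linarith)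
    have : dd δ γ ∈ T := by
      rw [hT]
      refine Finset.mem_image.mpr ⟨(δ, γ), Finset.mem_filter.mpr ⟨Finset.mem_product.mpr ⟨?_, ?_⟩, hne⟩, rfl⟩
      · simpa [Set.Finite.mem_toFinset] using hδF
      · simpa [Set.Finite.mem_toFinset] using hγF
    have := T.min'_le _ this
    have := min_le_right (1:ℝ) (T.min' hTne)
    linarith
  · exact ⟨1, one_pos, le_rfl, by
      intro γ hγ hγr δ hδ hclose hdd
      by_contra hne
      exact hTne ⟨dd δ γ, by
        rw [hT]
        refine Finset.mem_image.mpr ⟨(δ, γ), Finset.mem_filter.mpr ⟨Finset.mem_product.mpr ⟨?_, ?_⟩, hne⟩, rfl⟩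
        · simp [Set.Finite.mem_toFinset]
          exact hmemF δ hδ (by
            have h2 := norm_sub_norm_le (δ 0) (γ 0)
            linarith)
        · simp [Set.Finite.mem_toFinset]
          exact hmemF γ hγ (by linarith)⟩⟩


lemma generation {Γ : Subgroup (AffG n)} (hΓ : IsSpaceGroup Γ) {K : Set (Euc n)} {R : ℝ}
    (hR : 1 ≤ R) (hK : K ⊆ Metric.closedBall 0 R) (hcover : ∀ x : Euc n, ∃ γ ∈ Γ, γ x ∈ K) :
    ∀ γ ∈ Γ, γ ∈ Subgroup.closure {s : AffG n | s ∈ Γ ∧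
      ((⇑s '' Metric.closedBall (0:Euc n) (2*R+1)) ∩ Metric.closedBall 0 (2*R+1)).Nonempty} := by
  set S := {s : AffG n | s ∈ Γ ∧
      ((⇑s '' Metric.closedBall (0:Euc n) (2*R+1)) ∩ Metric.closedBall 0 (2*R+1)).Nonempty} with hS
  have main : ∀ k : ℕ, ∀ γ ∈ Γ, ‖γ 0‖ ≤ 2*R+1+k → γ ∈ Subgroup.closure S := by
    intro k
    induction k with
    | zero =>
      intro γ hγ h0
      push_cast at h0
      apply Subgroup.subset_closure
      refine ⟨hγ, γ 0, ⟨0, ?_, rfl⟩, ?_⟩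
      · simp only [Metric.mem_closedBall, dist_self]
        linarith
      · simp only [Metric.mem_closedBall, dist_zero_right]
        linarith
    | succ k ih =>
      intro γ hγ h0
      push_cast at h0
      by_cases hle : ‖γ 0‖ ≤ 2*R+1+k
      · exact ih γ hγ (by push_cast; linarith)
      · push_neg at hle
        have hk0 : (0:ℝ) ≤ (k:ℝ) := Nat.cast_nonneg k
        have hpos : (0:ℝ) < ‖γ 0‖ := by linarith
        have hR1 : R + 1 < ‖γ 0‖ := by linarith
        set c : ℝ := (R+1)/‖γ 0‖ with hc
        have hc0 : 0 < c := by positivity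
        have hc1 : c < 1 := (div_lt_one hpos).mpr hR1
        set x : Euc n := (1 - c) • γ 0 with hx
        have hxγ : ‖x - γ 0‖ = R + 1 := by
          rw [hx]
          have : (1 - c) • γ 0 - γ 0 = (-c) • γ 0 := by
            rw [sub_smul, one_smul, neg_smul]; abel
          rw [this, norm_smul, Real.norm_eq_abs, abs_of_neg (by linarith), hc]
          field_simp
        have hxn : ‖x‖ = ‖γ 0‖ - (R+1) := by
          rw [hx, norm_smul, Real.norm_eq_abs, abs_of_pos (by linarith : (0:ℝ) < 1 - c), hc]
          field_simp
        obtain ⟨δ, hδΓ, hδx⟩ := hcover x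
        have hδiso := hΓ.1 δ hδΓ
        have hγiso := hΓ.1 γ hγ
        have hδxR : ‖δ x‖ ≤ R := by
          have := hK hδx
          simpa [Metric.mem_closedBall, dist_zero_right] using this
        have hδinvx : dist (δ⁻¹ 0) x ≤ R := by
          have h1 := hδiso.dist_eq (δ⁻¹ 0) x
          rw [show δ (δ⁻¹ 0) = 0 from δ.apply_symm_apply 0] at h1
          rw [← h1, dist_comm, dist_zero_right]
          exact hδxR
        have hδinv : ‖δ⁻¹ 0‖ ≤ ‖γ 0‖ - 1 := by
          have htri := dist_triangle (δ⁻¹ 0) x 0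
          rw [dist_zero_right, dist_zero_right] at htri
          linarith [hxn, hδinvx, htri]
        have h1 : δ⁻¹ ∈ Subgroup.closure S := ih δ⁻¹ (inv_mem hδΓ) (by push_cast; linarith)
        have h2 : δ * γ ∈ S := by
          refine ⟨mul_mem hδΓ hγ, δ x, ⟨γ⁻¹ x, ?_, ?_⟩, ?_⟩
          · simp only [Metric.mem_closedBall, dist_zero_right]
            have h3 := hγiso.dist_eq (γ⁻¹ x) 0
            rw [show γ (γ⁻¹ x) = x from γ.apply_symm_apply x, dist_zero_right] at h3
            rw [← h3, dist_eq_norm]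
            linarith [hxγ]
          · show (δ * γ) (γ⁻¹ x) = δ x
            have : γ (γ⁻¹ x) = x := γ.apply_symm_apply x
            show δ (γ (γ⁻¹ x)) = δ x
            rw [this]
          · simp only [Metric.mem_closedBall, dist_zero_right]
            linarith
        have hfact : γ = δ⁻¹ * (δ * γ) := by group
        rw [hfact]
        exact mul_mem h1 (Subgroup.subset_closure h2)
  intro γ hγ
  refine main ⌈‖γ 0‖⌉₊ γ hγ ?_
  have := Nat.le_ceil ‖γ 0‖
  linarith


end Aux

set_option maxHeartbeats 2000000

/-- Theorem 12 (consequence): `Inn Γ ⊆ Aut_E Γ` and `Out_E Γ = Aut_E Γ / Inn Γ` is finite,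
i.e. `Inn Γ` has finite index in `Aut_E Γ`. -/
theorem stmt10 {n : ℕ} (Γ : Subgroup (AffG n)) (hΓ : IsSpaceGroup Γ)
    (AutE : Subgroup (MulAut ↥Γ))
    (hA : ∀ φ : MulAut ↥Γ, φ ∈ AutE ↔ ∃ η : AffG n, Isometry (⇑η) ∧
      ∀ γ : ↥Γ, (↑(φ γ) : AffG n) = η * (↑γ : AffG n) * η⁻¹) :
    (MulAut.conj : ↥Γ →* MulAut ↥Γ).range ≤ AutE ∧
    (((MulAut.conj : ↥Γ →* MulAut ↥Γ).range).subgroupOf AutE).FiniteIndex := by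
  classical
  obtain ⟨hiso, hpd, K, hKcpt, hKcov⟩ := hΓ
  have hΓ' : IsSpaceGroup Γ := ⟨hiso, hpd, K, hKcpt, hKcov⟩
  constructor
  · rintro φ ⟨γ, rfl⟩
    rw [hA]
    refine ⟨↑γ, hiso _ γ.2, fun δ => ?_⟩
    simp [MulAut.conj_apply, mul_assoc]
  -- Finite index part
  obtain ⟨r, hKr⟩ := hKcpt.isBounded.subset_closedBall 0
  set R : ℝ := max r 1 with hR
  have hR1 : (1:ℝ) ≤ R := le_max_right r 1
  have hKR : K ⊆ Metric.closedBall 0 R :=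
    hKr.trans (Metric.closedBall_subset_closedBall (le_max_left r 1))
  set S := {s : AffG n | s ∈ Γ ∧
      ((⇑s '' Metric.closedBall (0:Euc n) (2*R+1)) ∩ Metric.closedBall 0 (2*R+1)).Nonempty}
    with hSdef
  have hgen : ∀ γ ∈ Γ, γ ∈ Subgroup.closure S := generation hΓ' hR1 hKR hKcov
  have hS0 : ∀ s ∈ S, ‖s 0‖ ≤ 4*R+2 := by
    rintro s ⟨hsΓ, q, ⟨p, hp, rfl⟩, hq⟩
    have h1 : ‖s 0 - s p‖ = ‖p‖ := by
      rw [← dist_eq_norm, (hiso s hsΓ).dist_eq, dist_eq_norm, zero_sub, norm_neg]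
    have hp' : ‖p‖ ≤ 2*R+1 := by
      simpa [Metric.mem_closedBall, dist_zero_right] using hp
    have hq' : ‖s p‖ ≤ 2*R+1 := by
      simpa [Metric.mem_closedBall, dist_zero_right] using hq
    have h2 := norm_sub_norm_le (s 0) (s p)
    linarith
  obtain ⟨εd, hεd, hεd1, hdisc⟩ := discreteness hΓ' (4*R+2) (by linarith)
  set B : ℝ := 2*(1+R) + (4*R+2) + 2 with hB
  have hBpos : (0:ℝ) < B := by rw [hB]; linarith
  set ε' : ℝ := εd / (B+1) with hε'
  have hε'pos : 0 < ε' := div_pos hεd (by linarith)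
  -- choose implementing isometries with base point in K
  have hex : ∀ a : ↥AutE, ∃ η : AffG n, Isometry (⇑η) ∧ η 0 ∈ K ∧
      ∃ ψ : MulAut ↥Γ, (∃ g : ↥Γ, ψ = MulAut.conj g * (a : MulAut ↥Γ)) ∧
        ∀ δ : ↥Γ, (↑(ψ δ) : AffG n) = η * ↑δ * η⁻¹ := by
    intro a
    obtain ⟨η0, hη0iso, hη0⟩ := (hA _).mp a.2
    obtain ⟨g0, hg0Γ, hg0⟩ := hKcov (η0 0)
    refine ⟨g0 * η0, isometry_mul _ _ (hiso _ hg0Γ) hη0iso, hg0,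
      MulAut.conj (⟨g0, hg0Γ⟩ : ↥Γ) * (↑a : MulAut ↥Γ), ⟨⟨g0, hg0Γ⟩, rfl⟩, ?_⟩
    intro δ
    have h1 : (((MulAut.conj (⟨g0, hg0Γ⟩ : ↥Γ) * (↑a : MulAut ↥Γ)) δ : ↥Γ) : AffG n)
        = g0 * ↑((↑a : MulAut ↥Γ) δ) * g0⁻¹ := by
      simp [MulAut.conj_apply]
    rw [h1, hη0 δ]
    group
  choose η hηiso hηK ψ hψg hψ using hex
  have hfwd : ∀ a : ↥AutE, ∀ x, x ∈ Γ → η a * x * (η a)⁻¹ ∈ Γ := by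
    intro a x hx
    have h := hψ a ⟨x, hx⟩
    rw [← h]
    exact (ψ a ⟨x, hx⟩).2
  have hbwd : ∀ a : ↥AutE, ∀ x, x ∈ Γ → (η a)⁻¹ * x * η a ∈ Γ := by
    intro a x hx
    set y := (ψ a)⁻¹ ⟨x, hx⟩ with hy
    have h2 : ψ a y = ⟨x, hx⟩ := by
      rw [hy]
      exact (ψ a).apply_symm_apply _
    have h1 := hψ a y
    rw [h2] at h1
    have h3 : (η a)⁻¹ * x * η a = ↑y := by
      have h1' : (x : AffG n) = η a * ↑y * (η a)⁻¹ := h1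
      rw [h1']; group
    rw [h3]
    exact y.2
  set f : ↥AutE → Euc n × (Euc n →L[ℝ] Euc n) := fun a => (η a 0, lin (η a)) with hf
  set H := ((MulAut.conj : ↥Γ →* MulAut ↥Γ).range).subgroupOf AutE with hH
  have key : ∀ a b : ↥AutE, dist (f a) (f b) < ε' →
      (↑a : MulAut ↥Γ)⁻¹ * ↑b ∈ (MulAut.conj : ↥Γ →* MulAut ↥Γ).range := by
    intro a b hab
    set d := dist (f a) (f b) with hd
    have hd0 : (0:ℝ) ≤ d := dist_nonneg
    have hd1 : ‖η a 0 - η b 0‖ ≤ d := by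
      have h := le_max_left (dist (f a).1 (f b).1) (dist (f a).2 (f b).2)
      rw [← Prod.dist_eq] at h
      calc ‖η a 0 - η b 0‖ = dist (f a).1 (f b).1 := (dist_eq_norm _ _).symm
        _ ≤ d := h
    have hd2 : ‖lin (η a) - lin (η b)‖ ≤ d := by
      have h := le_max_right (dist (f a).1 (f b).1) (dist (f a).2 (f b).2)
      rw [← Prod.dist_eq] at h
      calc ‖lin (η a) - lin (η b)‖ = dist (f a).2 (f b).2 := (dist_eq_norm _ _).symm
        _ ≤ d := h
    set νv := η b * (η a)⁻¹ with hνv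
    have hνiso : Isometry (⇑νv) :=
      isometry_mul _ _ (hηiso b) (aff_isometry_inv _ (hηiso a))
    have hw : ‖(η a)⁻¹ 0‖ ≤ R := by
      rw [norm_inv_zero _ (hηiso a)]
      have := hKR (hηK a)
      simpa [Metric.mem_closedBall, dist_zero_right] using this
    have hν0 : ‖νv 0‖ ≤ (1+R) * d := by
      have B' : η a 0 + lin (η a) ((η a)⁻¹ 0) = 0 := by
        rw [← apply_eq]
        exact (η a).apply_symm_apply 0
      have e : νv 0 = (η b 0 - η a 0) + (lin (η b) - lin (η a)) ((η a)⁻¹ 0) :=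
        calc νv 0 = η b ((η a)⁻¹ 0) := rfl
          _ = η b 0 + lin (η b) ((η a)⁻¹ 0) := apply_eq _ _
          _ = (η b 0 - η a 0) + (lin (η b) - lin (η a)) ((η a)⁻¹ 0)
              + (η a 0 + lin (η a) ((η a)⁻¹ 0)) := by
            simp only [ContinuousLinearMap.sub_apply]
            abel
          _ = (η b 0 - η a 0) + (lin (η b) - lin (η a)) ((η a)⁻¹ 0) := by
            rw [B', add_zero]
      rw [e]
      have h1 : ‖(lin (η b) - lin (η a)) ((η a)⁻¹ 0)‖ ≤ d * R := by
        calc ‖(lin (η b) - lin (η a)) ((η a)⁻¹ 0)‖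
            ≤ ‖lin (η b) - lin (η a)‖ * ‖(η a)⁻¹ 0‖ := (lin (η b) - lin (η a)).le_opNorm _
          _ ≤ d * R := by
            apply mul_le_mul _ hw (norm_nonneg _) hd0
            rw [norm_sub_rev]; exact hd2
      calc ‖(η b 0 - η a 0) + (lin (η b) - lin (η a)) ((η a)⁻¹ 0)‖
          ≤ ‖η b 0 - η a 0‖ + ‖(lin (η b) - lin (η a)) ((η a)⁻¹ 0)‖ := norm_add_le _ _
        _ ≤ d + d * R := by
          have : ‖η b 0 - η a 0‖ ≤ d := by rw [norm_sub_rev]; exact hd1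
          linarith
        _ = (1+R) * d := by ring
    have hνlin : ‖lin νv - 1‖ ≤ d := by
      apply ContinuousLinearMap.opNorm_le_bound _ hd0
      intro x
      set y := lin (η a)⁻¹ x with hy
      have hyx : ‖y‖ = ‖x‖ := norm_lin _ (aff_isometry_inv _ (hηiso a)) x
      have e1 : lin νv x = lin (η b) y := by rw [hνv, lin_mul]
      have e2 : (1 : Euc n →L[ℝ] Euc n) x = lin (η a) y := by
        rw [ContinuousLinearMap.one_apply, hy, lin_inv_right]
      calc ‖(lin νv - 1) x‖ = ‖(lin (η b) - lin (η a)) y‖ := by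
            rw [ContinuousLinearMap.sub_apply, e1, e2, ContinuousLinearMap.sub_apply]
        _ ≤ ‖lin (η b) - lin (η a)‖ * ‖y‖ := (lin (η b) - lin (η a)).le_opNorm _
        _ ≤ d * ‖x‖ := by
          rw [hyx]
          apply mul_le_mul_of_nonneg_right _ (norm_nonneg x)
          rw [norm_sub_rev]; exact hd2
    have hBd2 : 2*((1+R)*d) + d*(4*R+2) + 2*d < εd := by
      have h1 : d * (B+1) < εd := (lt_div_iff₀ (by linarith)).mp hab
      have h2 : 2*((1+R)*d) + d*(4*R+2) + 2*d = d * B := by rw [hB]; ring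
      have h3 : d * B ≤ d * (B+1) := mul_le_mul_of_nonneg_left (by linarith) hd0
      linarith
    have hsmall : ∀ s ∈ S, νv * s * νv⁻¹ = s := by
      intro s hs
      have hsΓ : s ∈ Γ := hs.1
      have hs0 := hS0 s hs
      have hsiso := hiso s hsΓ
      have hconj : νv * s * νv⁻¹ ∈ Γ := by
        have e : νv * s * νv⁻¹ = η b * ((η a)⁻¹ * s * η a) * (η b)⁻¹ := by
          rw [hνv]; group
        rw [e]
        exact hfwd b _ (hbwd a s hsΓ)
      have t1 := conj_trans_est νv s hνiso hsiso
      have t2 := conj_lin_est νv s hνiso hsiso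
      have hmul : ‖lin νv - 1‖ * ‖s 0‖ ≤ d * (4*R+2) :=
        mul_le_mul hνlin hs0 (norm_nonneg _) hd0
      have hddlt : dd (νv * s * νv⁻¹) s < εd := by
        unfold dd
        linarith [t1, t2, hν0, hmul, hνlin, hBd2]
      have hclose : ‖(νv * s * νv⁻¹) 0 - s 0‖ < 1 := by
        have h1 : ‖(νv * s * νv⁻¹) 0 - s 0‖ ≤ dd (νv * s * νv⁻¹) s := by
          unfold dd
          linarith [norm_nonneg (lin (νv * s * νv⁻¹) - lin s)]
        linarith
      exact hdisc s hsΓ hs0 _ hconj hclose hddlt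
    have hScent : S ⊆ ↑(Subgroup.centralizer {νv}) := by
      intro s hs
      rw [SetLike.mem_coe, Subgroup.mem_centralizer_iff]
      intro g hg
      rw [Set.mem_singleton_iff] at hg
      subst hg
      have h := hsmall s hs
      calc νv * s = (νv * s * νv⁻¹) * νv := by group
        _ = s * νv := by rw [h]
    have hcent : ∀ x, x ∈ Γ → νv * x * νv⁻¹ = x := by
      intro x hx
      have hx1 : x ∈ Subgroup.centralizer {νv} :=
        (Subgroup.closure_le _).mpr hScent (hgen x hx)
      have h := Subgroup.mem_centralizer_iff.mp hx1 νv rfl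
      rw [h]; group
    have hηb : η b = νv * η a := by rw [hνv]; group
    have hψab : ψ a = ψ b := by
      apply DFunLike.ext
      intro δ
      apply Subtype.ext
      rw [hψ a δ, hψ b δ, hηb]
      have hmem : η a * ↑δ * (η a)⁻¹ ∈ Γ := hfwd a _ δ.2
      have h := hcent _ hmem
      calc η a * ↑δ * (η a)⁻¹ = νv * (η a * ↑δ * (η a)⁻¹) * νv⁻¹ := by rw [h]
        _ = (νv * η a) * ↑δ * (νv * η a)⁻¹ := by group
    obtain ⟨ga, hga⟩ := hψg a
    obtain ⟨gb, hgb⟩ := hψg b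
    have heq : MulAut.conj ga * (↑a : MulAut ↥Γ) = MulAut.conj gb * (↑b : MulAut ↥Γ) := by
      rw [← hga, ← hgb, hψab]
    have hb' : (↑b : MulAut ↥Γ) = ((MulAut.conj gb)⁻¹ * MulAut.conj ga) * ↑a :=
      calc (↑b : MulAut ↥Γ) = (MulAut.conj gb)⁻¹ * (MulAut.conj gb * ↑b) := by group
        _ = (MulAut.conj gb)⁻¹ * (MulAut.conj ga * ↑a) := by rw [heq]
        _ = ((MulAut.conj gb)⁻¹ * MulAut.conj ga) * ↑a := by group
    have hcc : (MulAut.conj gb)⁻¹ * MulAut.conj ga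
        = MulAut.conj ((gb⁻¹ * ga : ↥Γ)) := by
      rw [map_mul, map_inv]
    rw [MonoidHom.mem_range]
    refine ⟨(↑a : MulAut ↥Γ)⁻¹ (gb⁻¹ * ga), ?_⟩
    rw [hb', hcc]
    ext x
    simp [MulAut.conj_apply, mul_assoc]
  -- conclude finiteness of the quotient
  have hrel : ∀ a b : ↥AutE, dist (f a) (f b) < ε' →
      (QuotientGroup.mk a : ↥AutE ⧸ H) = QuotientGroup.mk b := by
    intro a b hab
    rw [QuotientGroup.eq]
    rw [hH, Subgroup.mem_subgroupOf]
    have hcast : ((a⁻¹ * b : ↥AutE) : MulAut ↥Γ) = (↑a : MulAut ↥Γ)⁻¹ * ↑b := by simp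
    rw [hcast]
    exact key a b hab
  have hout : ∀ c : ↥AutE ⧸ H, (QuotientGroup.mk (Quotient.out c) : ↥AutE ⧸ H) = c :=
    fun c => QuotientGroup.out_eq' c
  set F' : (↥AutE ⧸ H) → Euc n × (Euc n →L[ℝ] Euc n) := fun c => f (Quotient.out c) with hF'
  have hsep : ∀ c c' : ↥AutE ⧸ H, c ≠ c' → ε' ≤ dist (F' c) (F' c') := by
    intro c c' hne
    by_contra hlt
    push_neg at hlt
    exact hne (by rw [← hout c, ← hout c']; exact hrel _ _ hlt)
  have hbdd : Set.range F' ⊆ Metric.closedBall 0 (R+1) := by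
    rintro _ ⟨c, rfl⟩
    rw [Metric.mem_closedBall, dist_zero_right, Prod.norm_def]
    apply max_le
    · have := hKR (hηK (Quotient.out c))
      have h2 : ‖η (Quotient.out c) 0‖ ≤ R := by
        simpa [Metric.mem_closedBall, dist_zero_right] using this
      calc ‖(F' c).1‖ = ‖η (Quotient.out c) 0‖ := rfl
        _ ≤ R+1 := by linarith
    · calc ‖(F' c).2‖ = ‖lin (η (Quotient.out c))‖ := rfl
        _ ≤ 1 := norm_lin_le_one _ (hηiso _)
        _ ≤ R+1 := by linarith
  have hfin : (Set.range F').Finite := by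
    apply sep_finite _ 0 (R+1) ε' hbdd hε'pos
    rintro _ ⟨c, rfl⟩ _ ⟨c', rfl⟩ hne
    apply hsep
    rintro rfl
    exact hne rfl
  have hinj : Function.Injective F' := by
    intro c c' h
    by_contra hne
    have h1 := hsep c c' hne
    rw [h] at h1
    simp only [dist_self] at h1
    linarith
  haveI := hfin.to_subtype
  haveI : Finite (↥AutE ⧸ H) :=
    Finite.of_injective
      (fun c => (⟨F' c, Set.mem_range_self c⟩ : ↥(Set.range F')))
      (fun c c' h => hinj (congrArg Subtype.val h))
  exact H.finiteIndex_of_finite_quotient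
end

section
/- For i = 1, 2, let N_i be a complete normal subgroup of an n-space group Γ_i such that Γ_i/N_i is infinite cyclic, and let γ_i ∈ Γ_i be an element whose coset γ_iN_i generates Γ_i/N_i. For γ ∈ Γ_i, let γ_* denote the automorphism of N_i given by γ_*(ν) = γνγ⁻¹. Then an isomorphism α : N_1 → N_2 extends to an isomorphism φ : Γ_1 → Γ_2 if and only if α∘(γ_1)_*∘α⁻¹ and (γ_2)_* represent the same element of Out(N_2) = Aut(N_2)/Inn(N_2), or α∘(γ_1)_*∘α⁻¹ and (γ_2⁻¹)_* represent the same element of Out(N_2). -/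
/-! If `Γ / N` is infinite cyclic, generated by the coset of `c`, then `Γ ≅ N ⋊ ℤ` with `ℤ` acting
by conjugation by `c`, and the generators of `Γ / N` are exactly the cosets `N c` and `N c⁻¹`.
An isomorphism `φ : Γ₁ ≃* Γ₂` extending `α` maps `γ₁` to such a generator `δ` of `Γ₂ / N₂`, and
`α ∘ (γ₁)_* ∘ α⁻¹ = δ_*`. Conversely, if `α` intertwines `(γ₁)_*` with `δ_*` for a generator `δ`,
it induces an isomorphism of the two semidirect products. Writing `δ = ν γ₂^{±1}` with `ν ∈ N₂`
makes `δ_*` the composite of `(γ₂^{±1})_*` with the inner automorphism `ν_*`. -/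

open Multiplicative SemidirectProduct

namespace Subgroup

variable {Γ : Type*} [Group Γ]

structure IsInfCyclicQuotientGen (N : Subgroup Γ) (c : Γ) : Prop where
  exists_eq_mul_zpow : ∀ g : Γ, ∃ k : ℤ, ∃ ν ∈ N, g = ν * c ^ k
  eq_zero_of_zpow_mem : ∀ k : ℤ, c ^ k ∈ N → k = 0

section Semidirect

variable (N : Subgroup Γ) [N.Normal] (c : Γ)

abbrev zpowersConj : Multiplicative ℤ →* MulAut N :=
  MulAut.conjNormal.comp (zpowersHom Γ c)

def semidirectHom : N ⋊[zpowersConj N c] Multiplicative ℤ →* Γ :=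
  lift N.subtype (zpowersHom Γ c) fun _ ↦ rfl

end Semidirect

namespace IsInfCyclicQuotientGen

variable {N : Subgroup Γ} {c : Γ}

lemma of_ker (χ : Γ →* Multiplicative ℤ) (hχ : χ.ker = N) (hc : χ c = ofAdd 1) :
    IsInfCyclicQuotientGen N c where
  exists_eq_mul_zpow g := by
    refine ⟨(χ g).toAdd, g * c ^ (-(χ g).toAdd), ?_, by group⟩
    rw [← hχ, MonoidHom.mem_ker, map_mul, map_zpow, hc]
    apply toAdd.injective
    simp
  eq_zero_of_zpow_mem k hk := by
    rw [← hχ, MonoidHom.mem_ker, map_zpow, hc, ← ofAdd_zsmul] at hk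
    simpa using hk

lemma inv (h : IsInfCyclicQuotientGen N c) : IsInfCyclicQuotientGen N c⁻¹ where
  exists_eq_mul_zpow g := by
    obtain ⟨k, ν, hν, rfl⟩ := h.exists_eq_mul_zpow g
    exact ⟨-k, ν, hν, by group⟩
  eq_zero_of_zpow_mem k hk := by
    rw [inv_zpow, ← zpow_neg] at hk
    exact neg_eq_zero.mp (h.eq_zero_of_zpow_mem _ hk)

variable [N.Normal]

lemma semidirectHom_bijective (h : IsInfCyclicQuotientGen N c) :
    Function.Bijective (semidirectHom N c) := by
  refine ⟨(injective_iff_map_eq_one _).2 fun x hx ↦ ?_, fun g ↦ ?_⟩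
  · obtain ⟨⟨ν, hν⟩, k⟩ := x
    change ν * c ^ k.toAdd = 1 at hx
    have hk : c ^ k.toAdd ∈ N := by
      rw [eq_inv_of_mul_eq_one_right hx]
      exact N.inv_mem hν
    obtain rfl : k = 1 := toAdd.injective (h.eq_zero_of_zpow_mem _ hk)
    obtain rfl : ν = 1 := by simpa using hx
    rfl
  · obtain ⟨k, ν, hν, rfl⟩ := h.exists_eq_mul_zpow g
    exact ⟨⟨⟨ν, hν⟩, ofAdd k⟩, rfl⟩

noncomputable def semidirectEquiv (h : IsInfCyclicQuotientGen N c) :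
    N ⋊[zpowersConj N c] Multiplicative ℤ ≃* Γ :=
  MulEquiv.ofBijective _ h.semidirectHom_bijective

@[simp]
lemma semidirectEquiv_inl (h : IsInfCyclicQuotientGen N c) (ν : N) :
    h.semidirectEquiv (inl ν) = ν := by
  change (ν : Γ) * c ^ (0 : ℤ) = ν
  rw [zpow_zero, mul_one]

noncomputable def exponent (h : IsInfCyclicQuotientGen N c) : Γ →* Multiplicative ℤ :=
  rightHom.comp h.semidirectEquiv.symm.toMonoidHom

lemma exponent_mul_zpow (h : IsInfCyclicQuotientGen N c) {ν : Γ} (hν : ν ∈ N) (k : ℤ) :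
    h.exponent (ν * c ^ k) = ofAdd k := by
  have : ν * c ^ k = h.semidirectEquiv ⟨⟨ν, hν⟩, ofAdd k⟩ := rfl
  rw [this, exponent, MonoidHom.comp_apply, MulEquiv.coe_toMonoidHom, MulEquiv.symm_apply_apply]
  rfl

lemma ker_exponent (h : IsInfCyclicQuotientGen N c) : h.exponent.ker = N := by
  ext g
  obtain ⟨k, ν, hν, rfl⟩ := h.exists_eq_mul_zpow g
  rw [MonoidHom.mem_ker, h.exponent_mul_zpow hν, ofAdd_eq_one]
  constructor
  · rintro rfl
    simpa using hν
  · intro hg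
    exact h.eq_zero_of_zpow_mem k (by simpa [hν] using N.mul_mem (N.inv_mem hν) hg)

lemma exponent_self (h : IsInfCyclicQuotientGen N c) : h.exponent c = ofAdd 1 := by
  simpa using h.exponent_mul_zpow N.one_mem 1

lemma mul_left (h : IsInfCyclicQuotientGen N c) {ν : Γ} (hν : ν ∈ N) :
    IsInfCyclicQuotientGen N (ν * c) :=
  of_ker h.exponent h.ker_exponent (by simpa using h.exponent_mul_zpow hν 1)

lemma iff_eq_mul_or_eq_mul_inv (h : IsInfCyclicQuotientGen N c) {δ : Γ} :
    IsInfCyclicQuotientGen N δ ↔ ∃ ν ∈ N, δ = ν * c ∨ δ = ν * c⁻¹ := by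
  refine ⟨fun hδ ↦ ?_, ?_⟩
  · obtain ⟨k, ν, hν, rfl⟩ := h.exists_eq_mul_zpow δ
    obtain ⟨m, μ, hμ, hc⟩ := hδ.exists_eq_mul_zpow c
    have hkm : k * m = 1 := by
      have hμ' : h.exponent μ = 1 := by rwa [← MonoidHom.mem_ker, h.ker_exponent]
      have := congrArg h.exponent hc
      rw [map_mul, map_zpow, h.exponent_self, h.exponent_mul_zpow hν, hμ', one_mul,
        ← ofAdd_zsmul, EmbeddingLike.apply_eq_iff_eq, smul_eq_mul] at this
      linarith
    refine ⟨ν, hν, ?_⟩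
    rcases Int.eq_one_or_neg_one_of_mul_eq_one hkm with rfl | rfl <;> simp
  · rintro ⟨ν, hν, rfl | rfl⟩
    · exact h.mul_left hν
    · exact h.inv.mul_left hν

end IsInfCyclicQuotientGen

section Extension

variable {Γ₁ Γ₂ : Type*} [Group Γ₁] [Group Γ₂] {N₁ : Subgroup Γ₁} {N₂ : Subgroup Γ₂}

lemma IsInfCyclicQuotientGen.map {c : Γ₁} (h : IsInfCyclicQuotientGen N₁ c) (φ : Γ₁ ≃* Γ₂) :
    IsInfCyclicQuotientGen (N₁.map φ.toMonoidHom) (φ c) where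
  exists_eq_mul_zpow g := by
    obtain ⟨k, ν, hν, hg⟩ := h.exists_eq_mul_zpow (φ.symm g)
    refine ⟨k, φ ν, mem_map_of_mem _ hν, ?_⟩
    rw [← map_zpow, ← map_mul, ← hg, φ.apply_symm_apply]
  eq_zero_of_zpow_mem k hk := by
    rw [← map_zpow, mem_map_equiv, φ.symm_apply_apply] at hk
    exact h.eq_zero_of_zpow_mem k hk

lemma map_eq_of_forall_apply_eq {α : N₁ ≃* N₂} {φ : Γ₁ ≃* Γ₂} (hφ : ∀ x : N₁, φ x = α x) :
    N₁.map φ.toMonoidHom = N₂ := by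
  ext y
  constructor
  · rintro ⟨x, hx, rfl⟩
    simp [hφ ⟨x, hx⟩]
  · intro hy
    refine ⟨α.symm ⟨y, hy⟩, (α.symm ⟨y, hy⟩).2, ?_⟩
    simp [hφ]

variable [N₁.Normal] [N₂.Normal] {c₁ : Γ₁}

lemma exists_mulEquiv_extending_of_conj {c₂ : Γ₂} (h₁ : IsInfCyclicQuotientGen N₁ c₁)
    (h₂ : IsInfCyclicQuotientGen N₂ c₂) (α : N₁ ≃* N₂)
    (hα : ∀ x, α (MulAut.conjNormal c₁ x) = MulAut.conjNormal c₂ (α x)) :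
    ∃ φ : Γ₁ ≃* Γ₂, ∀ x : N₁, φ x = α x := by
  have hconj : (MulAut.congr α).toMonoidHom.comp (zpowersConj N₁ c₁) = zpowersConj N₂ c₂ :=
    MonoidHom.ext_mint <| by
      ext x
      simpa [MulAut.conjNormal_apply] using congrArg Subtype.val (hα (α.symm x))
  have hcompat (k : Multiplicative ℤ) :
      (zpowersConj N₁ c₁ k).trans α = α.trans (zpowersConj N₂ c₂ k) := by
    rw [← hconj]
    ext x
    simp
  refine ⟨h₁.semidirectEquiv.symm.trans
    ((congr α (MulEquiv.refl _) hcompat).trans h₂.semidirectEquiv), fun x ↦ ?_⟩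
  rw [MulEquiv.trans_apply, ← h₁.semidirectEquiv_inl x, MulEquiv.symm_apply_apply]
  exact h₂.semidirectEquiv_inl (α x)

theorem exists_mulEquiv_extending_iff (h₁ : IsInfCyclicQuotientGen N₁ c₁) (α : N₁ ≃* N₂) :
    (∃ φ : Γ₁ ≃* Γ₂, ∀ x : N₁, φ x = α x) ↔ ∃ δ : Γ₂, IsInfCyclicQuotientGen N₂ δ ∧
      ∀ x, α (MulAut.conjNormal c₁ x) = MulAut.conjNormal δ (α x) := by
  constructor
  · rintro ⟨φ, hφ⟩
    refine ⟨φ c₁, map_eq_of_forall_apply_eq hφ ▸ h₁.map φ, fun x ↦ Subtype.ext ?_⟩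
    simp [MulAut.conjNormal_apply, ← hφ]
  · rintro ⟨δ, hδ, hα⟩
    exact exists_mulEquiv_extending_of_conj h₁ hδ α hα

end Extension

section Ambient

variable {G : Type*} [Group G] {N₁ Γ₁ N₂ Γ₂ : Subgroup G}

lemma isInfCyclicQuotientGen_subgroupOf (hle : N₁ ≤ Γ₁) {c : G} (hc : c ∈ Γ₁)
    (hgen : ∀ g ∈ Γ₁, ∃ k : ℤ, ∃ ν ∈ N₁, g = ν * c ^ k) (hinf : ∀ k : ℤ, c ^ k ∈ N₁ → k = 0) :
    (N₁.subgroupOf Γ₁).IsInfCyclicQuotientGen ⟨c, hc⟩ where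
  exists_eq_mul_zpow g := by
    obtain ⟨k, ν, hν, hg⟩ := hgen g g.2
    exact ⟨k, ⟨ν, hle hν⟩, hν, Subtype.ext hg⟩
  eq_zero_of_zpow_mem k hk := hinf k hk

variable (hle₁ : N₁ ≤ Γ₁) (hle₂ : N₂ ≤ Γ₂) (α : N₁ ≃* N₂)

def subgroupOfCongr : N₁.subgroupOf Γ₁ ≃* N₂.subgroupOf Γ₂ :=
  (subgroupOfEquivOfLe hle₁).trans (α.trans (subgroupOfEquivOfLe hle₂).symm)

@[simp]
lemma coe_coe_subgroupOfCongr_apply (x : N₁.subgroupOf Γ₁) :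
    ((subgroupOfCongr hle₁ hle₂ α x : Γ₂) : G) = α ⟨x, x.2⟩ :=
  rfl

@[simp]
lemma coe_coe_subgroupOfCongr_symm_apply (x : N₂.subgroupOf Γ₂) :
    (((subgroupOfCongr hle₁ hle₂ α).symm x : Γ₁) : G) = α.symm ⟨x, x.2⟩ :=
  rfl

lemma exists_extending_iff_subgroupOf :
    (∃ φ : Γ₁ ≃* Γ₂, ∀ (g : G) (hg : g ∈ N₁), (φ ⟨g, hle₁ hg⟩ : G) = α ⟨g, hg⟩) ↔
      ∃ φ : Γ₁ ≃* Γ₂, ∀ x : N₁.subgroupOf Γ₁, φ x = subgroupOfCongr hle₁ hle₂ α x :=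
  exists_congr fun _ ↦
    ⟨fun h x ↦ Subtype.ext (h _ x.2), fun h g hg ↦ congrArg Subtype.val (h ⟨⟨g, hle₁ hg⟩, hg⟩)⟩

lemma conj_iff_subgroupOf [(N₁.subgroupOf Γ₁).Normal] [(N₂.subgroupOf Γ₂).Normal]
    {c δ : G} (hc : c ∈ Γ₁) (hδ : δ ∈ Γ₂) :
    (∀ x, subgroupOfCongr hle₁ hle₂ α (MulAut.conjNormal ⟨c, hc⟩ x) =
        MulAut.conjNormal ⟨δ, hδ⟩ (subgroupOfCongr hle₁ hle₂ α x)) ↔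
      ∀ (x : G) (hx : x ∈ N₂) (hy : c * (α.symm ⟨x, hx⟩ : G) * c⁻¹ ∈ N₁),
        (α ⟨c * (α.symm ⟨x, hx⟩ : G) * c⁻¹, hy⟩ : G) = δ * x * δ⁻¹ := by
  constructor
  · intro h x hx hy
    have := h ((subgroupOfCongr hle₁ hle₂ α).symm ⟨⟨x, hle₂ hx⟩, hx⟩)
    simpa [MulAut.conjNormal_apply] using
      congrArg (fun y : N₂.subgroupOf Γ₂ ↦ ((y : Γ₂) : G)) this
  · intro h x
    apply Subtype.ext
    apply Subtype.ext
    have := h _ (α ⟨x, x.2⟩).2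
    simp only [Subtype.coe_eta, MulEquiv.symm_apply_apply] at this
    simpa [MulAut.conjNormal_apply] using this
      (by simpa [mem_subgroupOf, MulAut.conjNormal_apply] using (MulAut.conjNormal ⟨c, hc⟩ x).2)

end Ambient

end Subgroup

open Subgroup in
theorem stmt15_general {n : ℕ} (Γ₁ Γ₂ N₁ N₂ : Subgroup (AffG n))
    (hN₁ : IsCompleteNormal N₁ Γ₁) (hN₂ : IsCompleteNormal N₂ Γ₂)
    (γ₁ γ₂ : AffG n) (hγ₁ : γ₁ ∈ Γ₁) (hγ₂ : γ₂ ∈ Γ₂)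
    (hgen₁ : ∀ g ∈ Γ₁, ∃ k : ℤ, ∃ ν ∈ N₁, g = ν * γ₁ ^ k)
    (hgen₂ : ∀ g ∈ Γ₂, ∃ k : ℤ, ∃ ν ∈ N₂, g = ν * γ₂ ^ k)
    (hinf₁ : ∀ k : ℤ, γ₁ ^ k ∈ N₁ → k = 0)
    (hinf₂ : ∀ k : ℤ, γ₂ ^ k ∈ N₂ → k = 0)
    (α : ↥N₁ ≃* ↥N₂) :
    (∃ φ : ↥Γ₁ ≃* ↥Γ₂,
      ∀ (g : AffG n) (hg : g ∈ N₁),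
        (↑(φ ⟨g, hN₁.1 hg⟩) : AffG n) = (↑(α ⟨g, hg⟩) : AffG n)) ↔
    ((∃ ν₀ ∈ N₂, ∀ (x : AffG n) (hx : x ∈ N₂)
        (hy : γ₁ * (↑(α.symm ⟨x, hx⟩) : AffG n) * γ₁⁻¹ ∈ N₁),
        (↑(α ⟨γ₁ * (↑(α.symm ⟨x, hx⟩) : AffG n) * γ₁⁻¹, hy⟩) : AffG n) =
          ν₀ * (γ₂ * x * γ₂⁻¹) * ν₀⁻¹) ∨
     (∃ ν₀ ∈ N₂, ∀ (x : AffG n) (hx : x ∈ N₂)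
        (hy : γ₁ * (↑(α.symm ⟨x, hx⟩) : AffG n) * γ₁⁻¹ ∈ N₁),
        (↑(α ⟨γ₁ * (↑(α.symm ⟨x, hx⟩) : AffG n) * γ₁⁻¹, hy⟩) : AffG n) =
          ν₀ * (γ₂⁻¹ * x * γ₂) * ν₀⁻¹)) := by
  obtain ⟨hle₁, hconj₁, -⟩ := hN₁
  obtain ⟨hle₂, hconj₂, -⟩ := hN₂
  have := (normal_subgroupOf_iff hle₁).2 fun _ _ hν hγ ↦ hconj₁ _ hγ _ hν
  have := (normal_subgroupOf_iff hle₂).2 fun _ _ hν hγ ↦ hconj₂ _ hγ _ hν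
  have h₁ := isInfCyclicQuotientGen_subgroupOf hle₁ hγ₁ hgen₁ hinf₁
  have h₂ := isInfCyclicQuotientGen_subgroupOf hle₂ hγ₂ hgen₂ hinf₂
  rw [exists_extending_iff_subgroupOf hle₁ hle₂, exists_mulEquiv_extending_iff h₁]
  constructor
  · rintro ⟨δ, hδ, hα⟩
    obtain ⟨ν, hν, rfl | rfl⟩ := h₂.iff_eq_mul_or_eq_mul_inv.1 hδ
    · refine .inl ⟨ν, hν, fun x hx hy ↦ ?_⟩
      rw [(conj_iff_subgroupOf hle₁ hle₂ α hγ₁ _).1 hα x hx hy]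
      push_cast
      group
    · refine .inr ⟨ν, hν, fun x hx hy ↦ ?_⟩
      rw [(conj_iff_subgroupOf hle₁ hle₂ α hγ₁ _).1 hα x hx hy]
      push_cast
      group
  · rintro (⟨ν, hν, hα⟩ | ⟨ν, hν, hα⟩)
    · refine ⟨⟨ν, hle₂ hν⟩ * ⟨γ₂, hγ₂⟩, h₂.iff_eq_mul_or_eq_mul_inv.2 ⟨_, hν, .inl rfl⟩,
        (conj_iff_subgroupOf hle₁ hle₂ α hγ₁ _).2 fun x hx hy ↦ ?_⟩
      rw [hα x hx hy]
      push_cast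
      group
    · refine ⟨⟨ν, hle₂ hν⟩ * ⟨γ₂, hγ₂⟩⁻¹, h₂.iff_eq_mul_or_eq_mul_inv.2 ⟨_, hν, .inr rfl⟩,
        (conj_iff_subgroupOf hle₁ hle₂ α hγ₁ _).2 fun x hx hy ↦ ?_⟩
      rw [hα x hx hy]
      push_cast
      group

/-- Lemma 19: with `Γᵢ/Nᵢ` infinite cyclic generated by `γᵢ Nᵢ`, an isomorphism
`α : N₁ → N₂` extends to an isomorphism `Γ₁ → Γ₂` iff `α(γ₁)⋆α⁻¹` agrees with
`(γ₂)⋆` or `(γ₂⁻¹)⋆` in `Out N₂`. -/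
theorem stmt15 {n : ℕ} (Γ₁ Γ₂ N₁ N₂ : Subgroup (AffG n))
    (hΓ₁ : IsSpaceGroup Γ₁) (hΓ₂ : IsSpaceGroup Γ₂)
    (hN₁ : IsCompleteNormal N₁ Γ₁) (hN₂ : IsCompleteNormal N₂ Γ₂)
    (γ₁ γ₂ : AffG n) (hγ₁ : γ₁ ∈ Γ₁) (hγ₂ : γ₂ ∈ Γ₂)
    (hgen₁ : ∀ g ∈ Γ₁, ∃ k : ℤ, ∃ ν ∈ N₁, g = ν * γ₁ ^ k)
    (hgen₂ : ∀ g ∈ Γ₂, ∃ k : ℤ, ∃ ν ∈ N₂, g = ν * γ₂ ^ k)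
    (hinf₁ : ∀ k : ℤ, γ₁ ^ k ∈ N₁ → k = 0)
    (hinf₂ : ∀ k : ℤ, γ₂ ^ k ∈ N₂ → k = 0)
    (α : ↥N₁ ≃* ↥N₂) :
    (∃ φ : ↥Γ₁ ≃* ↥Γ₂,
      ∀ (g : AffG n) (hg : g ∈ N₁),
        (↑(φ ⟨g, hN₁.1 hg⟩) : AffG n) = (↑(α ⟨g, hg⟩) : AffG n)) ↔
    ((∃ ν₀ ∈ N₂, ∀ (x : AffG n) (hx : x ∈ N₂)
        (hy : γ₁ * (↑(α.symm ⟨x, hx⟩) : AffG n) * γ₁⁻¹ ∈ N₁),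
        (↑(α ⟨γ₁ * (↑(α.symm ⟨x, hx⟩) : AffG n) * γ₁⁻¹, hy⟩) : AffG n) =
          ν₀ * (γ₂ * x * γ₂⁻¹) * ν₀⁻¹) ∨
     (∃ ν₀ ∈ N₂, ∀ (x : AffG n) (hx : x ∈ N₂)
        (hy : γ₁ * (↑(α.symm ⟨x, hx⟩) : AffG n) * γ₁⁻¹ ∈ N₁),
        (↑(α ⟨γ₁ * (↑(α.symm ⟨x, hx⟩) : AffG n) * γ₁⁻¹, hy⟩) : AffG n) =
          ν₀ * (γ₂⁻¹ * x * γ₂) * ν₀⁻¹)) :=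
  stmt15_general Γ₁ Γ₂ N₁ N₂ hN₁ hN₂ γ₁ γ₂ hγ₁ hγ₂ hgen₁ hgen₂ hinf₁ hinf₂ α
end
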